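/- arXiv:1107.0393 — 7 statements merged into one kernel-verified Lean document; each statement's English description precedes it below -/
import Mathlib

section
/- Let K be a compact subset of ℂ such that (ℂ ∪ {∞}) \ K is connected, and let U ⊆ ℂ be an open set containing K. Then there exists a simply connected open set V with K ⊆ V ⊆ U. -/
open Topology Filter Set

noncomputable section

/-- The complement of (the image of) `V ⊆ ℂ` in the Riemann sphere `ℂ ∪ {∞}`. -/
def sphereCompl (V : Set ℂ) : Set (OnePoint ℂ) := (OnePoint.some '' V)ᶜ

/-- The complement `(Ω ∪ {α}) \ F` in the one point compactification of `Ω`. -/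
def ocCompl (Ω F : Set ℂ) : Set (OnePoint Ω) :=
  (OnePoint.some '' {x : Ω | (x : ℂ) ∈ F})ᶜ

/-- `S` is locally connected at the point `a`. -/
def LocConnAt {X : Type*} [TopologicalSpace X] (S : Set X) (a : X) : Prop :=
  ∀ U ∈ 𝓝 a, ∃ W ∈ 𝓝 a, W ⊆ U ∧ IsConnected (W ∩ S)

/-- `F` is a relatively closed subset of `Ω`. -/
def RelClosed (Ω F : Set ℂ) : Prop :=
  F ⊆ Ω ∧ IsClosed ((fun x : Ω => (x : ℂ)) ⁻¹' F)

/-- `B` is a hole of `E` in `Ω`: a connected component of `Ω \ E` contained in a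
compact subset of `Ω`. -/
def IsHole (Ω E B : Set ℂ) : Prop :=
  (∃ x ∈ Ω \ E, B = connectedComponentIn (Ω \ E) x) ∧
  ∃ K : Set ℂ, IsCompact K ∧ K ⊆ Ω ∧ B ⊆ K

/-- The union of all holes of `E` in `Ω`. -/
def holesUnion (Ω E : Set ℂ) : Set ℂ := ⋃₀ {B | IsHole Ω E B}

/-- `F` is an Arakelian set in `Ω`: relatively closed, with `(Ω ∪ {α}) \ F`
connected and locally connected at `α`. -/
def ArakelianIn (Ω F : Set ℂ) : Prop :=
  RelClosed Ω F ∧ IsConnected (ocCompl Ω F) ∧ LocConnAt (ocCompl Ω F) OnePoint.infty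

/-!
Since the complement of `K` in the sphere is connected, no component of `ℂ \ K` is bounded. So if
`K ⊆ {|z| < R}`, every point outside `K` is joined by a path in `ℂ \ K` to the set `A = {R ≤ |z|}`.
Cover the compact set `(ℂ \ U) ∩ {|z| ≤ R}` by finitely many compact connected neighbourhoods
inside `ℂ \ K` and attach such a path to each of them. Together with `A` they form a closed,
connected, unbounded set `S ⊆ ℂ \ K` containing `ℂ \ U`; then `V = ℂ \ S` works, because its
complement in the sphere is `S ∪ {∞}`, and `∞` lies in the closure of the unbounded set `S`.
-/

open Metric

section Topological

variable {X : Type*} [TopologicalSpace X]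

theorem closure_connectedComponentIn_inter_subset (F : Set X) (x : X) :
    closure (connectedComponentIn F x) ∩ F ⊆ connectedComponentIn F x := by
  by_cases hx : x ∈ F
  · refine IsPreconnected.subset_connectedComponentIn ?_
      ⟨subset_closure (mem_connectedComponentIn hx), hx⟩ inter_subset_right
    exact isPreconnected_connectedComponentIn.subset_closure
      (subset_inter subset_closure (connectedComponentIn_subset F x)) inter_subset_left
  · simp [connectedComponentIn_eq_empty hx]

theorem exists_isCompact_isConnected_mem_nhds_subset [LocallyCompactSpace X] [T2Space X]
    [LocallyConnectedSpace X] {x : X} {U : Set X} (hU : U ∈ 𝓝 x) :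
    ∃ N ∈ 𝓝 x, N ⊆ U ∧ IsCompact N ∧ IsConnected N := by
  obtain ⟨L, hL, hLU, hLc⟩ := local_compact_nhds hU
  set C := connectedComponentIn (interior L) x
  have hC : C ∈ 𝓝 x := connectedComponentIn_mem_nhds (interior_mem_nhds.2 hL)
  have hCL : closure C ⊆ L :=
    closure_minimal ((connectedComponentIn_subset _ _).trans interior_subset) hLc.isClosed
  exact ⟨closure C, mem_of_superset hC subset_closure, hCL.trans hLU,
    hLc.of_isClosed_subset isClosed_closure hCL,
    (isConnected_connectedComponentIn_iff.2 (mem_interior_iff_mem_nhds.2 hL)).closure⟩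

theorem IsCompact.exists_isCompact_superset_isPreconnected_union [LocallyCompactSpace X]
    [T2Space X] [LocallyConnectedSpace X] {W A F : Set X} (hF : IsCompact F) (hFW : F ⊆ W)
    (hW : IsOpen W) (hA : IsConnected A) (hjoin : ∀ x ∈ W, ∃ a ∈ A, JoinedIn W x a) :
    ∃ L, IsCompact L ∧ F ⊆ L ∧ L ⊆ W ∧ IsPreconnected (A ∪ L) := by
  have hQ : ∀ x ∈ W, ∃ Q ∈ 𝓝 x, IsCompact Q ∧ Q ⊆ W ∧
      IsPreconnected (A ∪ Q) := by
    intro x hx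
    obtain ⟨N, hN, hNW, hNc, hNconn⟩ :=
      exists_isCompact_isConnected_mem_nhds_subset (hW.mem_nhds hx)
    obtain ⟨a, ha, γ, hγ⟩ := hjoin x hx
    have hNγ : IsPreconnected (N ∪ range γ) :=
      hNconn.isPreconnected.union x (mem_of_mem_nhds hN) ⟨0, γ.source⟩
        (isPreconnected_range γ.continuous)
    exact ⟨N ∪ range γ, mem_of_superset hN subset_union_left,
      hNc.union (isCompact_range γ.continuous), union_subset hNW (range_subset_iff.2 hγ),
      hA.isPreconnected.union' ⟨a, ha, Or.inr ⟨1, γ.target⟩⟩ hNγ⟩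
  choose! Q hQx hQc hQW hAQ using hQ
  obtain ⟨t, htF, hFt⟩ := hF.elim_nhds_subcover Q fun x hx => hQx x (hFW hx)
  have htW : ∀ x ∈ t, x ∈ W := fun x hx => hFW (htF x hx)
  refine ⟨⋃ x ∈ t, Q x, t.isCompact_biUnion fun x hx => hQc x (htW x hx), hFt,
    iUnion₂_subset fun x hx => hQW x (htW x hx), ?_⟩
  obtain ⟨a, ha⟩ := hA.nonempty
  refine isPreconnected_of_forall a fun y hy => ?_
  rcases hy with hy | hy
  · exact ⟨A, subset_union_left, ha, hy, hA.isPreconnected⟩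
  · obtain ⟨x, hx, hyx⟩ := mem_iUnion₂.1 hy
    exact ⟨A ∪ Q x, union_subset_union_right A (subset_biUnion_of_mem hx), Or.inl ha,
      Or.inr hyx, hAQ x (htW x hx)⟩

namespace OnePoint

theorem not_isCompact_closure_connectedComponentIn_compl [LocallyConnectedSpace X] {K : Set X}
    (hK : IsClosed K) (hKc : IsPreconnected ((↑) '' K : Set (OnePoint X))ᶜ) {x : X}
    (hx : x ∉ K) : ¬IsCompact (closure (connectedComponentIn Kᶜ x)) := by
  intro hC
  set C := connectedComponentIn Kᶜ x
  -- `(↑) '' C` would be clopen in the complement of `K` in `OnePoint X` and miss `∞`.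
  have hclosure : closure ((↑) '' C : Set (OnePoint X)) ⊆ (↑) '' closure C :=
    closure_minimal (image_mono subset_closure) (isClosed_image_coe.2 ⟨isClosed_closure, hC⟩)
  have hsub : ((↑) '' K : Set (OnePoint X))ᶜ ⊆ (↑) '' C := by
    refine hKc.subset_of_closure_inter_subset
      (isOpen_image_coe.2 hK.isOpen_compl.connectedComponentIn)
      ⟨x, by simpa using hx, mem_image_of_mem _ (mem_connectedComponentIn hx)⟩ ?_
    rintro _ ⟨hy, hyK⟩
    obtain ⟨z, hz, rfl⟩ := hclosure hy
    exact mem_image_of_mem _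
      (closure_connectedComponentIn_inter_subset _ _ ⟨hz, fun h => hyK (mem_image_of_mem _ h)⟩)
  exact infty_notMem_image_coe (hsub infty_notMem_image_coe)

theorem isConnected_insert_infty_image {S : Set X} (hS : IsConnected S)
    (hSc : ¬IsCompact (closure S)) : IsConnected (insert ∞ ((↑) '' S : Set (OnePoint X))) := by
  have hinf : (∞ : OnePoint X) ∈ closure ((↑) '' S) := by
    rw [mem_closure_iff_nhds_basis hasBasis_nhds_infty]
    rintro s ⟨hs, hsc⟩
    obtain ⟨z, hzS, hzs⟩ := not_subset.1 fun hSs =>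
      hSc (hsc.of_isClosed_subset isClosed_closure (closure_minimal hSs hs))
    exact ⟨z, mem_image_of_mem _ hzS, Or.inl (mem_image_of_mem _ hzs)⟩
  exact (hS.image _ continuous_coe.continuousOn).subset_closure (subset_insert _ _)
    (insert_subset hinf subset_closure)

end OnePoint

end Topological

theorem exists_mem_compl_ball_joinedIn_compl {X : Type*} [PseudoMetricSpace X] [ProperSpace X]
    [LocallyPathConnectedSpace X] {K : Set X} (hK : IsClosed K)
    (hKc : IsPreconnected ((↑) '' K : Set (OnePoint X))ᶜ) {x : X} (hx : x ∉ K) (c : X)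
    (r : ℝ) :
    ∃ p ∈ (ball c r)ᶜ, JoinedIn Kᶜ x p := by
  set C := connectedComponentIn Kᶜ x
  have hCunb : ¬Bornology.IsBounded C := fun h =>
    OnePoint.not_isCompact_closure_connectedComponentIn_compl hK hKc hx h.isCompact_closure
  obtain ⟨p, hpC, hp⟩ := not_subset.1 fun h => hCunb (isBounded_ball.subset h)
  have hCpath : IsPathConnected C :=
    hK.isOpen_compl.connectedComponentIn.isConnected_iff_isPathConnected.1
      (isConnected_connectedComponentIn_iff.2 hx)
  exact ⟨p, hp, (hCpath.joinedIn x (mem_connectedComponentIn hx) p hpC).mono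
    (connectedComponentIn_subset _ _)⟩

theorem isConnected_compl_ball_of_one_lt_rank {E : Type*} [NormedAddCommGroup E]
    [NormedSpace ℝ E] (h : 1 < Module.rank ℝ E) {r : ℝ} (hr : 0 < r) :
    IsConnected (ball (0 : E) r)ᶜ := by
  have hpolar :
      (ball (0 : E) r)ᶜ = (fun p : ℝ × E => p.1 • p.2) '' (Ici r ×ˢ sphere 0 1) := by
    ext z
    simp only [mem_compl_iff, mem_ball_zero_iff, not_lt, mem_image, mem_prod, mem_Ici,
      mem_sphere_zero_iff_norm, Prod.exists]
    constructor
    · intro hz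
      have hz0 : z ≠ 0 := norm_pos_iff.1 (hr.trans_le hz)
      exact ⟨‖z‖, ‖z‖⁻¹ • z, ⟨hz, norm_smul_inv_norm hz0⟩,
        smul_inv_smul₀ (norm_ne_zero_iff.2 hz0) z⟩
    · rintro ⟨t, u, ⟨ht, hu⟩, rfl⟩
      rwa [norm_smul, hu, mul_one, Real.norm_of_nonneg (hr.le.trans ht)]
  rw [hpolar]
  exact (isConnected_Ici.prod (isConnected_sphere h 0 zero_le_one)).image _
    (continuous_fst.smul continuous_snd).continuousOn

theorem isConnected_sphereCompl_compl {S : Set ℂ} (hS : IsConnected S)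
    (hSb : ¬Bornology.IsBounded S) : IsConnected (sphereCompl Sᶜ) := by
  rw [sphereCompl, OnePoint.compl_image_coe, compl_compl, union_singleton]
  exact OnePoint.isConnected_insert_infty_image hS fun h =>
    hSb (h.isBounded.subset subset_closure)

theorem stmt0 (K U : Set ℂ) (hK : IsCompact K) (hKc : IsConnected (sphereCompl K))
    (hU : IsOpen U) (hKU : K ⊆ U) :
    ∃ V : Set ℂ, IsOpen V ∧ IsConnected (sphereCompl V) ∧ K ⊆ V ∧ V ⊆ U := by
  obtain ⟨R, hR, hKR⟩ := hK.isBounded.subset_ball_lt 0 0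
  set A := (ball (0 : ℂ) R)ᶜ
  have hA : IsConnected A :=
    isConnected_compl_ball_of_one_lt_rank (by simp [Complex.rank_real_complex]) hR
  have hAunb : ¬Bornology.IsBounded A := fun h =>
    NormedSpace.unbounded_univ ℝ ℂ
      (union_compl_self (ball (0 : ℂ) R) ▸ isBounded_ball.union h)
  have hF : IsCompact (Uᶜ ∩ closedBall 0 R) :=
    (isCompact_closedBall 0 R).inter_left hU.isClosed_compl
  obtain ⟨L, hLc, hFL, hLK, hAL⟩ := hF.exists_isCompact_superset_isPreconnected_union
    (inter_subset_left.trans (compl_subset_compl.2 hKU)) hK.isClosed.isOpen_compl hA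
    fun x hx => exists_mem_compl_ball_joinedIn_compl hK.isClosed hKc.isPreconnected hx 0 R
  have hUS : Uᶜ ⊆ A ∪ L := fun z hz => by
    by_cases hzA : z ∈ A
    · exact Or.inl hzA
    · exact Or.inr (hFL ⟨hz, ball_subset_closedBall (not_not.1 hzA)⟩)
  refine ⟨(A ∪ L)ᶜ, (isOpen_ball.isClosed_compl.union hLc.isClosed).isOpen_compl,
    isConnected_sphereCompl_compl ⟨hA.nonempty.mono subset_union_left, hAL⟩
      fun h => hAunb (h.subset subset_union_left),
    subset_compl_comm.1 (union_subset (compl_subset_compl.2 hKR) hLK), compl_subset_comm.1 hUS⟩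
end
end

section
/- Let F = ⋃_{n=1}^∞ [({∑_{i=1}^n 2^{-i}} × [0,n]) ∪ ([∑_{i=1}^n 2^{-i}, ∑_{i=1}^{n+1} 2^{-i}] × {n})] ∪ ({1} × [0,∞)) ⊆ ℝ² ≅ ℂ. Then F is closed in ℂ, (ℂ ∪ {∞}) \ F is connected, but there exists an open set U ⊇ F such that no simply connected open set V satisfies F ⊆ V ⊆ U. -/
open Topology Filter Set

noncomputable section

/-- `∑_{i=1}^n 2^{-i}` -/
def s1 (n : ℕ) : ℝ := ∑ i ∈ Finset.Icc 1 n, ((2:ℝ))⁻¹ ^ i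

def Fset : Set ℂ :=
  (⋃ n ∈ {n : ℕ | 1 ≤ n},
    ({z : ℂ | z.re = s1 n ∧ z.im ∈ Set.Icc (0:ℝ) (n:ℝ)} ∪
     {z : ℂ | z.re ∈ Set.Icc (s1 n) (s1 (n+1)) ∧ z.im = (n:ℝ)}))
  ∪ {z : ℂ | z.re = 1 ∧ 0 ≤ z.im}

/-!
`Fset` lies in the closed half-strip `1/2 ≤ re ≤ 1, im ≥ 0`, and left of the line
`re = s1 (k + 1)` it coincides with the union of its first `k` pieces; hence it is closed.

The complement of `Fset` is covered by the half-planes `im < 0`, `re < 1/2`, `re > 1` and the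
convex regions `slot n` (below the `n`-th bar, between the `n`-th and `(n+1)`-st teeth) and
`attic n` (above the `n`-th bar, left of the `(n+1)`-st tooth), each of which meets the lower or
the left half-plane; so it is connected, and since it is unbounded it stays connected after
adding `∞`.

For `U` take the plane minus the centres of the open cells `(s1 n, s1 (n+1)) × (0, n)`. An open
`V ⊇ Fset` contains a ball around `1`, hence the bottom edge of the `n`-th cell for large `n`;
the other three edges lie on the comb. If moreover `V ⊆ U`, the frontier of that cell lies in
`V` but its centre does not, which separates the centre from `∞` in the complement of `V` on
the sphere.
-/

open Complex

theorem Convex.reProdIm {s t : Set ℝ} (hs : Convex ℝ s) (ht : Convex ℝ t) :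
    Convex ℝ (s ×ℂ t) :=
  (hs.linear_preimage reLm).inter (ht.linear_preimage imLm)

theorem isPreconnected_of_forall_exists_inter_nonempty {X : Type*} [TopologicalSpace X]
    {s b : Set X} (hb : IsPreconnected b) (hbs : b ⊆ s)
    (h : ∀ y ∈ s, ∃ c ⊆ s, y ∈ c ∧ IsPreconnected c ∧ (b ∩ c).Nonempty) :
    IsPreconnected s := by
  rcases s.eq_empty_or_nonempty with rfl | ⟨y, hy⟩
  · exact isPreconnected_empty
  obtain ⟨-, -, -, -, x, hx, -⟩ := h y hy
  refine isPreconnected_of_forall x fun z hz => ?_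
  obtain ⟨c, hcs, hzc, hc, hbc⟩ := h z hz
  exact ⟨b ∪ c, union_subset hbs hcs, Or.inl hx, Or.inr hzc, hb.union' hbc hc⟩

namespace OnePoint

variable {X : Type*} [TopologicalSpace X] {s : Set X}

theorem closure_image_coe_subset (hs : IsCompact (closure s)) :
    closure ((↑) '' s : Set (OnePoint X)) ⊆ (↑) '' closure s :=
  closure_minimal (image_mono subset_closure) (isClosed_image_coe.2 ⟨isClosed_closure, hs⟩)

theorem infty_mem_closure_image_coe (hs : ¬ IsCompact (closure s)) :
    (∞ : OnePoint X) ∈ closure ((↑) '' s) := by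
  refine mem_closure_iff_nhds.2 fun t ht => ?_
  obtain ⟨K, ⟨hKc, hK⟩, hKt⟩ := hasBasis_nhds_infty.mem_iff.1 ht
  obtain ⟨x, hxs, hxK⟩ : ∃ x ∈ s, x ∉ K := not_subset.1 fun hsK =>
    hs (hK.of_isClosed_subset isClosed_closure (closure_minimal hsK hKc))
  exact ⟨x, hKt (Or.inl ⟨x, hxK, rfl⟩), x, hxs, rfl⟩

end OnePoint

theorem isConnected_sphereCompl {V : Set ℂ} (hV : IsConnected Vᶜ)
    (hunb : ¬ Bornology.IsBounded Vᶜ) : IsConnected (sphereCompl V) := by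
  rw [sphereCompl, OnePoint.compl_image_coe]
  have hc : IsConnected ((↑) '' Vᶜ : Set (OnePoint ℂ)) :=
    hV.image _ OnePoint.continuous_coe.continuousOn
  refine hc.subset_closure subset_union_left (union_subset subset_closure ?_)
  exact singleton_subset_iff.2 <| OnePoint.infty_mem_closure_image_coe fun h =>
    hunb (h.isBounded.subset subset_closure)

theorem not_isPreconnected_sphereCompl {V R : Set ℂ} (hR : IsOpen R)
    (hRc : IsCompact (closure R)) (hfr : frontier R ⊆ V) {c : ℂ} (hcR : c ∈ R) (hcV : c ∉ V) :
    ¬ IsPreconnected (sphereCompl V) := by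
  set T : Set (OnePoint ℂ) := (↑) '' R
  have hcl : closure T ⊆ (↑) '' closure R := OnePoint.closure_image_coe_subset hRc
  have hcover : sphereCompl V ⊆ T ∪ (closure T)ᶜ := by
    intro u hu
    by_cases hu' : u ∈ closure T
    · obtain ⟨w, hw, rfl⟩ := hcl hu'
      by_cases hwR : w ∈ R
      · exact Or.inl ⟨w, hwR, rfl⟩
      · exact absurd ⟨w, hfr (hR.frontier_eq ▸ ⟨hw, hwR⟩), rfl⟩ hu
    · exact Or.inr hu'
  intro h
  obtain ⟨u, -, huT, hu⟩ := h T (closure T)ᶜ (OnePoint.isOpenMap_coe _ hR)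
    isClosed_closure.isOpen_compl hcover
    ⟨c, fun ⟨x, hx, hxc⟩ => hcV (OnePoint.coe_injective hxc ▸ hx), c, hcR, rfl⟩
    ⟨OnePoint.infty, fun ⟨x, _, hx⟩ => OnePoint.coe_ne_infty x hx,
      fun h => OnePoint.infty_notMem_image_coe (hcl h)⟩
  exact hu (subset_closure huT)

lemma s1_eq (n : ℕ) : s1 n = 1 - 2⁻¹ ^ n := by
  induction n with
  | zero => simp [s1]
  | succ k ih =>
    rw [s1, Finset.sum_Icc_succ_top (by omega), ← s1, ih, pow_succ]
    ring

lemma s1_strictMono : StrictMono s1 := fun m n h => by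
  rw [s1_eq, s1_eq, sub_lt_sub_iff_left]
  exact pow_lt_pow_right_of_lt_one₀ (by norm_num) (by norm_num) h

lemma s1_lt_one (n : ℕ) : s1 n < 1 := by
  rw [s1_eq]
  linarith [pow_pos (by norm_num : (0 : ℝ) < 2⁻¹) n]

lemma s1_one : s1 1 = 2⁻¹ := by
  rw [s1_eq]; norm_num

lemma half_le_s1 {n : ℕ} (hn : 1 ≤ n) : 2⁻¹ ≤ s1 n :=
  s1_one ▸ s1_strictMono.monotone hn

lemma exists_s1_le_lt {x : ℝ} (h0 : 0 ≤ x) (h1 : x < 1) : ∃ n, s1 n ≤ x ∧ x < s1 (n + 1) := by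
  obtain ⟨n, hn, hn'⟩ := exists_nat_pow_near_of_lt_one (sub_pos.2 h1) (by linarith)
    (by norm_num : (0 : ℝ) < 2⁻¹) (by norm_num)
  exact ⟨n, by rw [s1_eq]; linarith, by rw [s1_eq]; linarith⟩

def piece (n : ℕ) : Set ℂ := {s1 n} ×ℂ Icc 0 n ∪ Icc (s1 n) (s1 (n + 1)) ×ℂ {(n : ℝ)}

lemma Fset_eq : Fset = (⋃ n ∈ {n : ℕ | 1 ≤ n}, piece n) ∪ {1} ×ℂ Ici 0 := rfl

lemma mem_Fset {z : ℂ} : z ∈ Fset ↔ (∃ n, 1 ≤ n ∧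
    ((z.re = s1 n ∧ z.im ∈ Icc 0 (n : ℝ)) ∨ (z.re ∈ Icc (s1 n) (s1 (n + 1)) ∧ z.im = n))) ∨
    (z.re = 1 ∧ 0 ≤ z.im) := by
  simp only [Fset_eq, mem_union, mem_iUnion, exists_prop]
  rfl

lemma Fset_subset_strip : Fset ⊆ Icc 2⁻¹ 1 ×ℂ Ici 0 := by
  intro z hz
  rcases mem_Fset.1 hz with ⟨n, hn, ⟨hre, him⟩ | ⟨hre, him⟩⟩ | ⟨hre, him⟩
  · exact ⟨⟨hre ▸ half_le_s1 hn, hre ▸ (s1_lt_one n).le⟩, him.1⟩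
  · exact ⟨⟨(half_le_s1 hn).trans hre.1, hre.2.trans (s1_lt_one _).le⟩,
      show 0 ≤ z.im from him ▸ n.cast_nonneg⟩
  · exact ⟨⟨hre ▸ by norm_num, hre.le⟩, him⟩

lemma isClosed_piece (n : ℕ) : IsClosed (piece n) :=
  (isClosed_singleton.reProdIm isClosed_Icc).union (isClosed_Icc.reProdIm isClosed_singleton)

lemma Fset_subset_biUnion_piece_union (k : ℕ) :
    Fset ⊆ (⋃ n ∈ Finset.Icc 1 k, piece n) ∪ Ici (s1 (k + 1)) ×ℂ univ := by
  intro z hz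
  rcases mem_Fset.1 hz with ⟨n, hn, hzn⟩ | ⟨hre, -⟩
  · rcases le_or_gt n k with hnk | hkn
    · exact Or.inl (mem_biUnion (Finset.mem_Icc.2 ⟨hn, hnk⟩) hzn)
    · refine Or.inr ⟨?_, trivial⟩
      have hk : s1 (k + 1) ≤ s1 n := s1_strictMono.monotone hkn
      rcases hzn with ⟨hre, -⟩ | ⟨hre, -⟩
      · exact hk.trans_eq hre.symm
      · exact hk.trans hre.1
  · exact Or.inr ⟨(s1_lt_one _).le.trans_eq hre.symm, trivial⟩

theorem isClosed_Fset : IsClosed Fset := by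
  refine isClosed_of_closure_subset fun z hz => ?_
  obtain ⟨⟨hre, hre'⟩, him⟩ :=
    closure_minimal Fset_subset_strip (isClosed_Icc.reProdIm isClosed_Ici) hz
  rcases hre'.lt_or_eq with hlt | heq
  · obtain ⟨k, -, hk⟩ := exists_s1_le_lt (by linarith [show (0 : ℝ) < 2⁻¹ by norm_num]) hlt
    have hclosed : IsClosed ((⋃ n ∈ Finset.Icc 1 k, piece n) ∪ Ici (s1 (k + 1)) ×ℂ univ) :=
      (isClosed_biUnion_finset fun n _ => isClosed_piece n).union
        (isClosed_Ici.reProdIm isClosed_univ)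
    rcases closure_minimal (Fset_subset_biUnion_piece_union k) hclosed hz with h | h
    · obtain ⟨n, hn, hzn⟩ := mem_iUnion₂.1 h
      exact mem_Fset.2 (Or.inl ⟨n, (Finset.mem_Icc.1 hn).1, hzn⟩)
    · exact absurd h.1 (not_le.2 hk)
  · exact mem_Fset.2 (Or.inr ⟨heq, him⟩)

def slot (n : ℕ) : Set ℂ := Ioo (s1 n) (s1 (n + 1)) ×ℂ Iio (n : ℝ)

def attic (n : ℕ) : Set ℂ := Iio (s1 (n + 1)) ×ℂ Ioi (n : ℝ)

lemma disjoint_Fset_slot (n : ℕ) : Disjoint Fset (slot n) := by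
  refine disjoint_left.2 ?_
  rintro z hz ⟨⟨hlo, hhi⟩, him : z.im < n⟩
  rcases mem_Fset.1 hz with ⟨m, -, ⟨hre, -⟩ | ⟨hre, him'⟩⟩ | ⟨hre, -⟩
  · rw [hre, s1_strictMono.lt_iff_lt] at hlo hhi
    omega
  · rw [him', Nat.cast_lt] at him
    linarith [hre.2, s1_strictMono.monotone (show m + 1 ≤ n by omega)]
  · linarith [s1_lt_one (n + 1)]

lemma disjoint_Fset_attic (n : ℕ) : Disjoint Fset (attic n) := by
  refine disjoint_left.2 ?_
  rintro z hz ⟨hre' : z.re < s1 (n + 1), him : (n : ℝ) < z.im⟩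
  rcases mem_Fset.1 hz with ⟨m, -, ⟨hre, him'⟩ | ⟨hre, him'⟩⟩ | ⟨hre, -⟩
  · rw [hre, s1_strictMono.lt_iff_lt] at hre'
    have : (m : ℝ) ≤ n := by exact_mod_cast Nat.lt_succ_iff.1 hre'
    linarith [him'.2]
  · rw [him', Nat.cast_lt] at him
    linarith [hre.1, s1_strictMono.monotone (show n + 1 ≤ m by omega)]
  · linarith [s1_lt_one (n + 1)]

lemma exists_mem_slot_or_mem_attic {z : ℂ} (hz : z ∉ Fset) (hre : z.re ∈ Ico 2⁻¹ 1)
    (him : 0 ≤ z.im) : ∃ n, z ∈ slot n ∨ z ∈ attic n := by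
  obtain ⟨n, hn, hn'⟩ :=
    exists_s1_le_lt (by linarith [hre.1, show (0 : ℝ) < 2⁻¹ by norm_num]) hre.2
  have hn1 : 1 ≤ n := by
    by_contra! h
    obtain rfl : n = 0 := by omega
    linarith [hre.1, s1_one]
  refine ⟨n, ?_⟩
  rcases lt_or_ge (n : ℝ) z.im with hup | hdown
  · exact Or.inr ⟨hn', hup⟩
  refine Or.inl ⟨⟨hn.lt_of_ne fun h => hz ?_, hn'⟩, hdown.lt_of_ne fun h => hz ?_⟩
  · exact mem_Fset.2 (Or.inl ⟨n, hn1, Or.inl ⟨h.symm, him, hdown⟩⟩)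
  · exact mem_Fset.2 (Or.inl ⟨n, hn1, Or.inr ⟨⟨hn, hn'.le⟩, h⟩⟩)

theorem isConnected_compl_Fset : IsConnected Fsetᶜ := by
  set H : Set ℂ := univ ×ℂ Iio 0
  set L : Set ℂ := Iio 2⁻¹ ×ℂ univ
  have hconv {s t : Set ℝ} (hs : Convex ℝ s) (ht : Convex ℝ t) : IsPreconnected (s ×ℂ t) :=
    (hs.reProdIm ht).isPreconnected
  have hbase : (H ∪ L) ∪ Ioi 1 ×ℂ univ ⊆ Fsetᶜ := by
    rintro z hz hzF
    obtain ⟨⟨h1, h2⟩, h3 : 0 ≤ z.im⟩ := Fset_subset_strip hzF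
    rcases hz with (⟨-, h : z.im < 0⟩ | ⟨h : z.re < 2⁻¹, -⟩) | ⟨h : 1 < z.re, -⟩ <;> linarith
  have hHL : IsPreconnected (H ∪ L) :=
    (hconv convex_univ (convex_Iio 0)).union' ⟨-I, by simp [H, L, mem_reProdIm]⟩
      (hconv (convex_Iio _) convex_univ)
  refine ⟨⟨-I, hbase (Or.inl (Or.inl (by simp [H, mem_reProdIm])))⟩,
    isPreconnected_of_forall_exists_inter_nonempty hHL (subset_union_left.trans hbase) ?_⟩
  intro z hz
  by_cases hzHL : z ∈ H ∪ L
  · exact ⟨H ∪ L, subset_union_left.trans hbase, hzHL, hHL, z, hzHL, hzHL⟩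
  simp only [H, L, mem_union, mem_reProdIm, mem_Iio, mem_univ, and_true, true_and, not_or,
    not_lt] at hzHL
  obtain ⟨him, hre⟩ := hzHL
  rcases lt_trichotomy z.re 1 with hre' | hre' | hre'
  · obtain ⟨n, hn | hn⟩ := exists_mem_slot_or_mem_attic hz ⟨hre, hre'⟩ him
    · refine ⟨slot n, (disjoint_Fset_slot n).subset_compl_left, hn,
        hconv (convex_Ioo _ _) (convex_Iio _), ⟨z.re, -1⟩, Or.inl ⟨trivial, ?_⟩, hn.1, ?_⟩
      · show (-1 : ℝ) < 0; norm_num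
      · show (-1 : ℝ) < n; linarith [n.cast_nonneg (α := ℝ)]
    · refine ⟨attic n, (disjoint_Fset_attic n).subset_compl_left, hn,
        hconv (convex_Iio _) (convex_Ioi _), ⟨0, z.im⟩, Or.inr ⟨?_, trivial⟩, ?_, hn.2⟩
      · show (0 : ℝ) < 2⁻¹; norm_num
      · show (0 : ℝ) < s1 (n + 1); linarith [half_le_s1 (Nat.le_add_left 1 n)]
  · exact absurd (mem_Fset.2 (Or.inr ⟨hre', him⟩)) hz
  · refine ⟨Ioi 1 ×ℂ univ, subset_union_right.trans hbase, ⟨hre', trivial⟩,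
      hconv (convex_Ioi _) convex_univ, ⟨z.re, -1⟩, Or.inl ⟨trivial, ?_⟩, hre', trivial⟩
    show (-1 : ℝ) < 0; norm_num

theorem not_isBounded_compl_Fset : ¬ Bornology.IsBounded Fsetᶜ := by
  intro h
  obtain ⟨r, hr⟩ := h.subset_closedBall 0
  have hz : (⟨0, -(|r| + 1)⟩ : ℂ) ∈ Fsetᶜ := fun hz => by
    have : (0 : ℝ) ≤ -(|r| + 1) := (Fset_subset_strip hz).2
    linarith [abs_nonneg r]
  have : |-(|r| + 1)| ≤ r := (abs_im_le_norm _).trans (mem_closedBall_zero_iff.1 (hr hz))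
  rw [abs_neg, abs_of_nonneg (by positivity)] at this
  linarith [le_abs_self r]

def cell (n : ℕ) : Set ℂ := Ioo (s1 n) (s1 (n + 1)) ×ℂ Ioo 0 n

def cellCenter (n : ℕ) : ℂ := ⟨(s1 n + s1 (n + 1)) / 2, n / 2⟩

lemma cellCenter_mem_cell {n : ℕ} (hn : 1 ≤ n) : cellCenter n ∈ cell n := by
  have hs := s1_strictMono (lt_add_one n)
  have hn' : (1 : ℝ) ≤ n := by exact_mod_cast hn
  exact ⟨⟨by show s1 n < (s1 n + s1 (n + 1)) / 2; linarith,
    by show (s1 n + s1 (n + 1)) / 2 < s1 (n + 1); linarith⟩,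
    by show (0 : ℝ) < n / 2; linarith, by show (n : ℝ) / 2 < n; linarith⟩

lemma cellCenter_notMem_Fset {n : ℕ} (hn : 1 ≤ n) : cellCenter n ∉ Fset := by
  obtain ⟨hre, -, him⟩ := cellCenter_mem_cell hn
  exact (disjoint_Fset_slot n).notMem_of_mem_right ⟨hre, him⟩

lemma isClosed_image_cellCenter (s : Set ℕ) : IsClosed (cellCenter '' s) := by
  refine (isProperMap_iff_tendsto_cocompact.2 ⟨continuous_of_discreteTopology, ?_⟩).isClosedMap
    s (isClosed_discrete s)
  rw [cocompact_eq_atTop]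
  refine tendsto_cocompact_of_tendsto_dist_comp_atTop 0 (tendsto_atTop_mono (fun n => ?_)
    ((tendsto_natCast_atTop_atTop (R := ℝ)).atTop_div_const two_pos))
  rw [dist_zero_right]
  exact (le_abs_self _).trans (abs_im_le_norm (cellCenter n))

lemma frontier_cell_subset {n : ℕ} (hn : 1 ≤ n) {V : Set ℂ} (hFV : Fset ⊆ V) {ε : ℝ}
    (hε : Metric.ball 1 ε ⊆ V) (hεn : 2⁻¹ ^ n < ε) : frontier (cell n) ⊆ V := by
  have hs := s1_strictMono (lt_add_one n)
  have hn' : (0 : ℝ) < n := by exact_mod_cast hn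
  rw [cell, frontier_reProdIm, closure_Ioo hs.ne, closure_Ioo hn'.ne, frontier_Ioo hs,
    frontier_Ioo hn']
  rintro z (⟨hre, him | him⟩ | ⟨hre | hre, him⟩)
  · apply hε
    rw [Metric.mem_ball, dist_of_im_eq (by simpa using him), Real.dist_eq, one_re,
      abs_of_nonpos (by linarith [hre.2, s1_lt_one (n + 1)])]
    linarith [hre.1, s1_eq n]
  · exact hFV (mem_Fset.2 (Or.inl ⟨n, hn, Or.inr ⟨hre, him⟩⟩))
  · exact hFV (mem_Fset.2 (Or.inl ⟨n, hn, Or.inl ⟨hre, him⟩⟩))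
  · refine hFV (mem_Fset.2 (Or.inl ⟨n + 1, by omega, Or.inl ⟨hre, him.1, ?_⟩⟩))
    push_cast; linarith [him.2]

theorem not_isPreconnected_sphereCompl_of_Fset_subset {V : Set ℂ} (hV : IsOpen V)
    (hFV : Fset ⊆ V) (hcV : ∀ n, 1 ≤ n → cellCenter n ∉ V) :
    ¬ IsPreconnected (sphereCompl V) := by
  obtain ⟨ε, hε, hball⟩ :=
    Metric.isOpen_iff.1 hV 1 (hFV (mem_Fset.2 (Or.inr ⟨one_re, one_im.ge⟩)))
  obtain ⟨n, hnε, hn⟩ := (((tendsto_pow_atTop_nhds_zero_of_lt_one (by norm_num)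
    (by norm_num : (2 : ℝ)⁻¹ < 1)).eventually (gt_mem_nhds hε)).and (eventually_ge_atTop 1)).exists
  exact not_isPreconnected_sphereCompl (isOpen_Ioo.reProdIm isOpen_Ioo)
    (Metric.isBounded_Ioo _ _ |>.reProdIm (Metric.isBounded_Ioo _ _)).isCompact_closure
    (frontier_cell_subset hn hFV hball hnε) (cellCenter_mem_cell hn) (hcV n hn)

theorem stmt1 :
    IsClosed Fset ∧ IsConnected (sphereCompl Fset) ∧
    ∃ U : Set ℂ, IsOpen U ∧ Fset ⊆ U ∧
      ¬ ∃ V : Set ℂ, IsOpen V ∧ IsConnected (sphereCompl V) ∧ Fset ⊆ V ∧ V ⊆ U := by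
  refine ⟨isClosed_Fset, isConnected_sphereCompl isConnected_compl_Fset not_isBounded_compl_Fset,
    (cellCenter '' Ici 1)ᶜ, (isClosed_image_cellCenter _).isOpen_compl, ?_, ?_⟩
  · rintro z hz ⟨n, hn, rfl⟩
    exact cellCenter_notMem_Fset hn hz
  · rintro ⟨V, hV, hVconn, hFV, hVU⟩
    exact not_isPreconnected_sphereCompl_of_Fset_subset hV hFV
      (fun n hn hnV => hVU hnV ⟨n, hn, rfl⟩) hVconn.isPreconnected
end
end

section
/- Let Ω ⊆ ℂ be open and F ⊆ Ω relatively closed. Then (Ω ∪ {α}) \ F is connected if and only if F has no holes in Ω. -/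
open Topology Filter Set

noncomputable section

/-! The components of the open set `Ω \ F` are open, and each is relatively closed in `Ω \ F`.
A component contained in a compact subset of `Ω` has closure in `Ω ∪ {α}` avoiding `α`, so it
is clopen in `(Ω ∪ {α}) \ F` and disconnects it. Conversely, a component not contained in any
compact subset of `Ω` accumulates at `α`, so if there are no holes every component `B` gives a
connected set `B ∪ {α}`, and these all meet at `α`. -/

open OnePoint

theorem Topology.IsEmbedding.image_connectedComponentIn {X Y : Type*} [TopologicalSpace X]
    [TopologicalSpace Y] {f : X → Y} (hf : IsEmbedding f) {s : Set X} {x : X} (hx : x ∈ s) :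
    f '' connectedComponentIn s x = connectedComponentIn (f '' s) (f x) := by
  refine (hf.continuous.continuousOn.image_connectedComponentIn_subset hx).antisymm ?_
  set C := connectedComponentIn (f '' s) (f x)
  have hC : C ⊆ range f := (connectedComponentIn_subset _ _).trans (image_subset_range _ _)
  have hpre : IsPreconnected (f ⁻¹' C) := by
    rw [← hf.isInducing.isPreconnected_image, image_preimage_eq_of_subset hC]
    exact isPreconnected_connectedComponentIn
  have hsub : f ⁻¹' C ⊆ connectedComponentIn s x :=
    hpre.subset_connectedComponentIn (mem_connectedComponentIn (mem_image_of_mem f hx))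
      (hf.injective.preimage_image s ▸ preimage_mono (connectedComponentIn_subset _ _))
  calc C = f '' (f ⁻¹' C) := (image_preimage_eq_of_subset hC).symm
    _ ⊆ f '' connectedComponentIn s x := image_mono hsub

theorem inter_closure_connectedComponentIn_subset {X : Type*} [TopologicalSpace X] (V : Set X)
    (x : X) : V ∩ closure (connectedComponentIn V x) ⊆ connectedComponentIn V x := by
  by_cases hx : x ∈ V
  · refine (isPreconnected_connectedComponentIn.subset_closure
      (subset_inter (connectedComponentIn_subset _ _) subset_closure) inter_subset_right)
      |>.subset_connectedComponentIn ⟨hx, subset_closure (mem_connectedComponentIn hx)⟩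
        inter_subset_left
  · simp [connectedComponentIn_eq_empty hx]

namespace OnePoint

variable {X : Type*} [TopologicalSpace X]

theorem infty_mem_closure_image_coe_iff [T2Space X] {A : Set X} :
    (∞ : OnePoint X) ∈ closure ((↑) '' A) ↔ ∀ K, IsCompact K → ¬ A ⊆ K := by
  simp only [mem_closure_iff_nhds_basis hasBasis_nhds_infty, mem_image, union_singleton,
    mem_insert_iff, mem_compl_iff, exists_exists_and_eq_and, coe_ne_infty, some_eq_iff,
    exists_eq_right, false_or, and_imp, not_subset]
  exact forall_congr' fun K => ⟨fun h hK => h hK.isClosed hK, fun h _ => h⟩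

theorem isPreconnected_compl_image_coe_iff [LocallyConnectedSpace X] {C : Set X}
    (hC : IsClosed C) : IsPreconnected ((↑) '' C : Set (OnePoint X))ᶜ ↔
      ∀ x ∈ Cᶜ, (∞ : OnePoint X) ∈ closure ((↑) '' connectedComponentIn Cᶜ x) := by
  rw [compl_image_coe, union_singleton]
  constructor
  · intro h x hx
    by_contra hx_infty
    have hopen : IsOpen ((↑) '' connectedComponentIn Cᶜ x : Set (OnePoint X)) :=
      isOpen_image_coe.2 hC.isOpen_compl.connectedComponentIn
    have hclosed : closure ((↑) '' connectedComponentIn Cᶜ x) ∩ insert ∞ ((↑) '' Cᶜ) ⊆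
        ((↑) '' connectedComponentIn Cᶜ x : Set (OnePoint X)) := by
      rintro p ⟨hp, (rfl | ⟨z, hz, rfl⟩)⟩
      · exact absurd hp hx_infty
      · refine mem_image_of_mem _ (inter_closure_connectedComponentIn_subset _ _ ⟨hz, ?_⟩)
        rwa [isOpenEmbedding_coe.isEmbedding.closure_eq_preimage_closure_image]
    have hmeet : (insert ∞ ((↑) '' Cᶜ) ∩
        ((↑) '' connectedComponentIn Cᶜ x : Set (OnePoint X))).Nonempty :=
      ⟨x, subset_insert _ _ (mem_image_of_mem _ hx),
        mem_image_of_mem _ (mem_connectedComponentIn hx)⟩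
    exact infty_notMem_image_coe <|
      h.subset_of_closure_inter_subset hopen hmeet hclosed (mem_insert _ _)
  · intro h
    refine isPreconnected_of_forall ∞ ?_
    rintro _ (rfl | ⟨x, hx, rfl⟩)
    · exact ⟨{∞}, singleton_subset_iff.2 (mem_insert _ _), rfl, rfl,
        isPreconnected_singleton⟩
    · refine ⟨insert ∞ ((↑) '' connectedComponentIn Cᶜ x),
        insert_subset_insert (image_mono (connectedComponentIn_subset _ _)), mem_insert _ _,
        subset_insert _ _ (mem_image_of_mem _ (mem_connectedComponentIn hx)), ?_⟩
      exact (isPreconnected_connectedComponentIn.image _ continuous_coe.continuousOn).subset_closure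
        (subset_insert _ _) (insert_subset (h x hx) subset_closure)

end OnePoint

theorem exists_isHole_iff (Ω F : Set ℂ) : (∃ B, IsHole Ω F B) ↔
    ∃ x : Ω, (x : ℂ) ∉ F ∧
      ∃ K : Set Ω, IsCompact K ∧ connectedComponentIn (Subtype.val ⁻¹' F)ᶜ x ⊆ K := by
  have hcc : ∀ x : Ω, (x : ℂ) ∉ F → connectedComponentIn (Ω \ F) x =
      Subtype.val '' connectedComponentIn (Subtype.val ⁻¹' F)ᶜ x := fun x hx => by
    rw [IsEmbedding.subtypeVal.image_connectedComponentIn hx, ← preimage_compl,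
      Subtype.image_preimage_coe, sdiff_eq]
  constructor
  · rintro ⟨_, ⟨z, hz, rfl⟩, K, hK, hKΩ, hBK⟩
    refine ⟨⟨z, hz.1⟩, hz.2, Subtype.val ⁻¹' K, ?_, ?_⟩
    · rwa [Subtype.isCompact_iff, image_preimage_eq_of_subset (by rwa [Subtype.range_coe])]
    · rwa [← image_subset_iff, ← hcc _ hz.2]
  · rintro ⟨x, hx, K, hK, hCK⟩
    exact ⟨_, ⟨⟨x, ⟨x.2, hx⟩, rfl⟩, Subtype.val '' K, hK.image continuous_subtype_val,
      image_subset_iff.2 fun y _ => y.2, (hcc x hx).trans_subset (image_mono hCK)⟩⟩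

theorem stmt3 (Ω F : Set ℂ) (hΩ : IsOpen Ω) (hF : RelClosed Ω F) :
    IsConnected (ocCompl Ω F) ↔ ∀ B : Set ℂ, ¬ IsHole Ω F B := by
  have := hΩ.locallyConnectedSpace
  have hne : (ocCompl Ω F).Nonempty := ⟨∞, infty_notMem_image_coe⟩
  rw [IsConnected, and_iff_right hne, ← not_exists, exists_isHole_iff]
  refine (isPreconnected_compl_image_coe_iff hF.2).trans ?_
  simp only [infty_mem_closure_image_coe_iff, mem_compl_iff, mem_preimage, not_exists, not_and]
end
end

section
/- Let Ω ⊆ ℂ be open and F ⊆ Ω an Arakelian set in Ω. Then for every open set U with F ⊆ U ⊆ Ω, there exists an open set V ⊆ Ω such that F ⊆ V ⊆ U and (Ω ∪ {α}) \ V is connected. -/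
open Topology Filter Set

noncomputable section

/-!
Write `E = (Ω ∪ {α}) \ F` as `{α} ∪ G` with `G = Ω \ F` open in `Ω`. Local connectedness of `E`
at `α` yields neighbourhoods `W 0 ⊇ W 1 ⊇ ⋯` shrinking to `α`, with
`closure (W (n+1)) ⊆ interior (W n)` and every `W n ∩ E` connected. The path component in
`G ∩ interior (W n)` of a point of `W (n+1) ∩ E` accumulates at `α`, since otherwise it would
disconnect `W (n+1) ∩ E`; chaining such paths gives a closed connected tail from the point to `α`
inside `W n ∩ E`. The compact set `A = (Ω ∪ {α}) \ U` is covered annulus by annulus by finitely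
many tails, each thickened by a compact connected neighbourhood of its starting point. Since only
finitely many pieces meet each compact subset of `Ω`, their union `C` with `α` is closed; it is
connected because every piece contains `α`, and `V = Ω \ C` is the required open set.
-/

open OnePoint

theorem exists_mem_sdiff_succ {α : Type*} {V : ℕ → Set α} {x : α} (h0 : x ∈ V 0)
    (h : ∃ n, x ∉ V n) : ∃ n, x ∈ V n \ V (n + 1) := by
  by_contra! hstay
  obtain ⟨n, hn⟩ := h
  exact hn (Nat.rec h0 (fun k hk => not_not.1 fun hk' => hstay k ⟨hk, hk'⟩) n)

section General

variable {X : Type*} [TopologicalSpace X]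

theorem isClosed_insert_iUnion_of_tendsto_smallSets [T2Space X] {a : X} {S : ℕ → Set X}
    (hS : ∀ n, IsClosed (S n)) (hlim : Tendsto S atTop (𝓝 a).smallSets) :
    IsClosed (insert a (⋃ n, S n)) := by
  refine isOpen_compl_iff.1 (isOpen_iff_mem_nhds.2 fun x hx => ?_)
  simp only [mem_compl_iff, mem_insert_iff, mem_iUnion, not_or, not_exists] at hx
  obtain ⟨U, T, hU, hT, hUT⟩ := t2_separation_nhds (x := x) (y := a) hx.1
  obtain ⟨N, hN⟩ := eventually_atTop.1 (tendsto_smallSets_iff.1 hlim T hT)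
  have hfar : ⋂ n ∈ Finset.range N, (S n)ᶜ ∈ 𝓝 x :=
    (Finset.range N).iInter_mem_sets.2 fun n _ => (hS n).isOpen_compl.mem_nhds (hx.2 n)
  filter_upwards [hU, hfar] with y hyU hyfar
  simp only [mem_iInter, Finset.mem_range] at hyfar
  simp only [mem_compl_iff, mem_insert_iff, mem_iUnion, not_or, not_exists]
  refine ⟨fun hya => hUT.ne_of_mem hyU (hya ▸ mem_of_mem_nhds hT) rfl, fun n hyn => ?_⟩
  by_cases hn : n < N
  · exact hyfar n hn hyn
  · exact hUT.ne_of_mem hyU (hN n (not_lt.1 hn) hyn) rfl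

theorem isPreconnected_insert_iUnion_of_chain {a : X} {S : ℕ → Set X}
    (hS : ∀ n, IsPreconnected (S n)) (hchain : ∀ n, (S n ∩ S (n + 1)).Nonempty)
    (hlim : Tendsto S atTop (𝓝 a).smallSets) : IsPreconnected (insert a (⋃ n, S n)) := by
  have ha : a ∈ closure (⋃ n, S n) := by
    refine mem_closure_iff_nhds.2 fun T hT => ?_
    obtain ⟨n, hn⟩ := (tendsto_smallSets_iff.1 hlim T hT).exists
    obtain ⟨x, hx, -⟩ := hchain n
    exact ⟨x, hn hx, mem_iUnion_of_mem n hx⟩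
  exact (IsPreconnected.iUnion_of_chain hS hchain).subset_closure (subset_insert _ _)
    (insert_subset ha subset_closure)

structure IsShrinkingNhdsSeq (E : Set X) (a : X) (W : ℕ → Set X) : Prop where
  mem_nhds : ∀ n, W n ∈ 𝓝 a
  isPreconnected_inter : ∀ n, IsPreconnected (W n ∩ E)
  closure_succ_subset : ∀ n, closure (W (n + 1)) ⊆ interior (W n)
  tendsto : Tendsto W atTop (𝓝 a).smallSets

theorem IsShrinkingNhdsSeq.antitone {E : Set X} {a : X} {W : ℕ → Set X}
    (hW : IsShrinkingNhdsSeq E a W) : Antitone W :=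
  antitone_nat_of_succ_le fun n =>
    subset_closure.trans ((hW.closure_succ_subset n).trans interior_subset)

theorem exists_isShrinkingNhdsSeq [RegularSpace X] {E : Set X} {a : X}
    [(𝓝 a).IsCountablyGenerated] (hE : IsPreconnected E) (hloc : LocConnAt E a) :
    ∃ W, IsShrinkingNhdsSeq E a W ∧ W 1 = univ := by
  obtain ⟨b, hb⟩ := (𝓝 a).exists_antitone_basis
  have hstep : ∀ s ∈ 𝓝 a, ∃ t ∈ 𝓝 a, IsPreconnected (t ∩ E) ∧ closure t ⊆ interior s := by
    intro s hs
    obtain ⟨c, hc, hcl, hcs⟩ := exists_mem_nhds_isClosed_subset (interior_mem_nhds.2 hs)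
    obtain ⟨t, ht, htc, htE⟩ := hloc c hc
    exact ⟨t, ht, htE.isPreconnected, (closure_minimal htc hcl).trans hcs⟩
  choose! next hnext using hstep
  let V : ℕ → Set X := fun n => Nat.rec univ (fun k t => next (t ∩ b k)) n
  have hV : ∀ n, V n ∈ 𝓝 a := fun n => by
    induction n with
    | zero => exact univ_mem
    | succ k ih => exact (hnext _ (inter_mem ih (hb.mem k))).1
  have hVsucc : ∀ k, closure (V (k + 1)) ⊆ interior (V k) ∩ interior (b k) := fun k =>
    (hnext _ (inter_mem (hV k) (hb.mem k))).2.2.trans interior_inter.subset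
  refine ⟨fun n => V (n - 1), ⟨fun n => hV _, fun n => ?_, fun n => ?_, ?_⟩, rfl⟩
  · rcases n with _ | _ | k
    · simpa [V] using hE
    · simpa [V] using hE
    · exact (hnext _ (inter_mem (hV k) (hb.mem k))).2.1
  · rcases n with _ | k
    · simp [V]
    · exact (hVsucc k).trans inter_subset_left
  · refine (hb.tendsto_smallSets.comp (tendsto_sub_atTop_nat 2)).smallSets_mono
      ((eventually_ge_atTop 2).mono fun n hn => ?_)
    obtain ⟨k, rfl⟩ : ∃ k, n = k + 2 := ⟨n - 2, by omega⟩
    simp only [Function.comp_apply, show k + 2 - 1 = k + 1 by omega, Nat.add_sub_cancel]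
    exact subset_closure.trans ((hVsucc k).trans (inter_subset_right.trans interior_subset))

theorem IsShrinkingNhdsSeq.exists_mem_annulus [T1Space X] {E : Set X} {a x : X}
    {W : ℕ → Set X} (hW : IsShrinkingNhdsSeq E a W) (hW1 : W 1 = univ) (hx : x ≠ a) :
    ∃ n, x ∈ closure (W (n + 1)) \ interior (W (n + 2)) := by
  obtain ⟨N, hN⟩ := eventually_atTop.1
    (tendsto_smallSets_iff.1 hW.tendsto _ (isOpen_compl_singleton.mem_nhds hx.symm))
  obtain ⟨n, hin, hout⟩ := exists_mem_sdiff_succ (V := fun n => interior (W (n + 1)))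
    (by simp [hW1]) ⟨N, fun h => hN (N + 1) N.le_succ (interior_subset h) rfl⟩
  exact ⟨n, interior_subset_closure hin, hout⟩

end General

theorem OnePoint.coe_mem_insert_infty_image {Y : Type*} {s : Set Y} {y : Y} :
    (y : OnePoint Y) ∈ insert ∞ ((↑) '' s) ↔ y ∈ s := by
  simp [coe_ne_infty]

section OnePointSpace

variable {Y : Type*} [TopologicalSpace Y]

theorem closure_pathComponentIn_inter_subset [LocallyPathConnectedSpace Y] {O : Set Y}
    (hO : IsOpen O) (y : Y) : closure (pathComponentIn O y) ∩ O ⊆ pathComponentIn O y := by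
  rintro z ⟨hzcl, hzO⟩
  obtain ⟨w, hwz, hwy⟩ :=
    mem_closure_iff_nhds.1 hzcl _ (pathComponentIn_mem_nhds (hO.mem_nhds hzO))
  exact JoinedIn.trans (hwy : JoinedIn O y w) (hwz : JoinedIn O z w).symm

instance OnePoint.isCountablyGenerated_nhds_infty [T2Space Y] [WeaklyLocallyCompactSpace Y]
    [SigmaCompactSpace Y] : (𝓝 (∞ : OnePoint Y)).IsCountablyGenerated := by
  let K := CompactExhaustion.choice Y
  refine HasBasis.isCountablyGenerated (p := fun _ : ℕ => True)
    (s := fun n => ((↑) '' K n : Set (OnePoint Y))ᶜ) (hasBasis_nhds_infty.to_hasBasis ?_ ?_)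
  · rintro s ⟨-, hs⟩
    obtain ⟨n, hn⟩ := K.exists_superset_of_isCompact hs
    refine ⟨n, trivial, ?_⟩
    rw [compl_image_coe]
    exact union_subset_union_left _ (image_mono (compl_subset_compl.2 hn))
  · intro n _
    exact ⟨K n, ⟨(K.isCompact n).isClosed, K.isCompact n⟩, (compl_image_coe _).symm.subset⟩

theorem exists_joinedIn_mem_of_isPreconnected [LocallyPathConnectedSpace Y]
    {D : Set (OnePoint Y)} (hD : IsPreconnected D) (hinf : ∞ ∈ D) {O : Set Y} (hO : IsOpen O)
    (hDO : ∀ y : Y, (y : OnePoint Y) ∈ D → y ∈ O) {y : Y} (hy : (y : OnePoint Y) ∈ D)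
    {T : Set (OnePoint Y)} (hT : T ∈ 𝓝 ∞) : ∃ z : Y, (z : OnePoint Y) ∈ T ∧ JoinedIn O y z := by
  by_contra! hfar
  have hPopen : IsOpen ((↑) '' pathComponentIn O y : Set (OnePoint Y)) :=
    isOpenMap_coe _ (hO.pathComponentIn y)
  refine infty_notMem_image_coe (hD.subset_of_closure_inter_subset hPopen
    ⟨y, hy, y, mem_pathComponentIn_self (hDO y hy), rfl⟩ ?_ hinf)
  rintro x ⟨hxcl, hxD⟩
  rcases eq_or_ne x ∞ with rfl | hx
  · obtain ⟨_, hzT, z, hzP, rfl⟩ := mem_closure_iff_nhds.1 hxcl T hT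
    exact absurd hzP (hfar z hzT)
  · obtain ⟨z, rfl⟩ := ne_infty_iff_exists.1 hx
    rw [← mem_preimage, ← isOpenEmbedding_coe.isEmbedding.closure_eq_preimage_closure_image]
      at hxcl
    exact mem_image_of_mem _ (closure_pathComponentIn_inter_subset hO y ⟨hxcl, hDO z hxD⟩)

variable {G : Set Y} {W : ℕ → Set (OnePoint Y)}

theorem exists_path_to_next_nhds [LocallyPathConnectedSpace Y] (hG : IsOpen G)
    (hW : IsShrinkingNhdsSeq (insert ∞ ((↑) '' G)) ∞ W) {k : ℕ} {y : Y} (hyG : y ∈ G)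
    (hyW : (y : OnePoint Y) ∈ W (k + 1)) :
    ∃ z ∈ G, (z : OnePoint Y) ∈ W (k + 2) ∧ ∃ s : Set Y, IsCompact s ∧ IsPreconnected s ∧
      y ∈ s ∧ z ∈ s ∧ (↑) '' s ⊆ W k ∩ insert ∞ ((↑) '' G) := by
  obtain ⟨z, hzW, hjoin⟩ := exists_joinedIn_mem_of_isPreconnected (hW.isPreconnected_inter (k + 1))
    ⟨mem_of_mem_nhds (hW.mem_nhds _), mem_insert _ _⟩
    ((isOpen_interior.preimage continuous_coe).inter hG)
    (fun x hx =>
      ⟨hW.closure_succ_subset k (subset_closure hx.1), coe_mem_insert_infty_image.1 hx.2⟩)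
    ⟨hyW, coe_mem_insert_infty_image.2 hyG⟩ (hW.mem_nhds (k + 2))
  let γ := hjoin.somePath
  refine ⟨z, hjoin.target_mem.2, hzW, range γ, isCompact_range γ.continuous,
    isPreconnected_range γ.continuous, ⟨0, γ.source⟩, ⟨1, γ.target⟩, ?_⟩
  rintro _ ⟨_, ⟨t, rfl⟩, rfl⟩
  exact ⟨interior_subset (hjoin.somePath_mem t).1,
    coe_mem_insert_infty_image.2 (hjoin.somePath_mem t).2⟩

theorem exists_tail [T2Space Y] [LocallyCompactSpace Y] [LocallyPathConnectedSpace Y]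
    (hG : IsOpen G) (hW : IsShrinkingNhdsSeq (insert ∞ ((↑) '' G)) ∞ W) {m : ℕ} {y : Y}
    (hyG : y ∈ G) (hyW : (y : OnePoint Y) ∈ W (m + 1)) :
    ∃ L, IsClosed L ∧ IsPreconnected L ∧ (y : OnePoint Y) ∈ L ∧ ∞ ∈ L ∧
      L ⊆ W m ∩ insert ∞ ((↑) '' G) := by
  have : Nonempty Y := ⟨y⟩
  choose! next hnextG hnextW path hcomp hpre hmem hmem' hsub using
    fun k (z : Y) (hz : z ∈ G) (hzW : (z : OnePoint Y) ∈ W (k + 1)) =>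
      exists_path_to_next_nhds hG hW hz hzW
  let pt : ℕ → Y := fun k => Nat.rec y (fun k z => next (m + k) z) k
  have hpt : ∀ k, pt k ∈ G ∧ OnePoint.some (pt k) ∈ W (m + k + 1) := fun k => by
    induction k with
    | zero => exact ⟨hyG, hyW⟩
    | succ k ih => exact ⟨hnextG _ _ ih.1 ih.2, hnextW _ _ ih.1 ih.2⟩
  let S : ℕ → Set (OnePoint Y) := fun k => (↑) '' path (m + k) (pt k)
  have hSsub : ∀ k, S k ⊆ W (m + k) ∩ insert ∞ ((↑) '' G) := fun k =>
    hsub _ _ (hpt k).1 (hpt k).2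
  have hlim : Tendsto S atTop (𝓝 ∞).smallSets :=
    (hW.tendsto.comp ((tendsto_add_atTop_nat m).congr fun k => add_comm k m)).smallSets_mono
      (Eventually.of_forall fun k => (hSsub k).trans inter_subset_left)
  refine ⟨insert ∞ (⋃ k, S k), ?_, ?_, ?_, mem_insert _ _, ?_⟩
  · exact isClosed_insert_iUnion_of_tendsto_smallSets
      (fun k => ((hcomp _ _ (hpt k).1 (hpt k).2).image continuous_coe).isClosed) hlim
  · refine isPreconnected_insert_iUnion_of_chain
      (fun k => (hpre _ _ (hpt k).1 (hpt k).2).image _ continuous_coe.continuousOn)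
      (fun k => ⟨pt (k + 1), ?_, ?_⟩) hlim
    · exact mem_image_of_mem _ (hmem' _ _ (hpt k).1 (hpt k).2)
    · exact mem_image_of_mem _ (hmem _ _ (hpt (k + 1)).1 (hpt (k + 1)).2)
  · exact mem_insert_of_mem _ (mem_iUnion_of_mem 0 (mem_image_of_mem _ (hmem _ _ hyG hyW)))
  · refine insert_subset ⟨mem_of_mem_nhds (hW.mem_nhds m), mem_insert _ _⟩
      (iUnion_subset fun k => (hSsub k).trans ?_)
    exact inter_subset_inter_left _ (hW.antitone (Nat.le_add_right m k))

theorem exists_closed_nhds_joined_to_infty [T2Space Y] [LocallyCompactSpace Y]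
    [LocallyPathConnectedSpace Y] (hG : IsOpen G)
    (hW : IsShrinkingNhdsSeq (insert ∞ ((↑) '' G)) ∞ W) {m : ℕ} {y : Y} (hyG : y ∈ G)
    (hyW : (y : OnePoint Y) ∈ interior (W (m + 1))) :
    ∃ P ∈ 𝓝 (y : OnePoint Y), IsClosed P ∧ IsPreconnected P ∧ ∞ ∈ P ∧
      P ⊆ W m ∩ insert ∞ ((↑) '' G) := by
  have hO : (↑) ⁻¹' interior (W (m + 1)) ∩ G ∈ 𝓝 y :=
    ((isOpen_interior.preimage continuous_coe).inter hG).mem_nhds ⟨hyW, hyG⟩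
  obtain ⟨Q, hQ, hQO, hQc⟩ := local_compact_nhds hO
  let Q' := closure (connectedComponentIn Q y)
  have hQ'Q : Q' ⊆ Q := closure_minimal (connectedComponentIn_subset _ _) hQc.isClosed
  have hyQ' : y ∈ Q' := subset_closure (mem_connectedComponentIn (mem_of_mem_nhds hQ))
  obtain ⟨L, hLcl, hLpre, hyL, hinfL, hLsub⟩ := exists_tail hG hW hyG (interior_subset hyW)
  refine ⟨(↑) '' Q' ∪ L, mem_of_superset (isOpenMap_coe.image_mem_nhds
      (mem_of_superset (connectedComponentIn_mem_nhds hQ) subset_closure)) subset_union_left,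
    ((hQc.of_isClosed_subset isClosed_closure hQ'Q).image continuous_coe).isClosed.union hLcl,
    (isPreconnected_connectedComponentIn.closure.image _ continuous_coe.continuousOn).union _
      (mem_image_of_mem _ hyQ') hyL hLpre, Or.inr hinfL, union_subset ?_ hLsub⟩
  rintro _ ⟨z, hz, rfl⟩
  obtain ⟨hzW, hzG⟩ := hQO (hQ'Q hz)
  exact ⟨hW.antitone m.le_succ (interior_subset hzW), coe_mem_insert_infty_image.2 hzG⟩

-- For the outermost annulus `n = 0` the bound is `W (0 - 1) = W 0`; `W 1 = univ` covers this case.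
theorem exists_closed_nhds_joined_to_infty_of_mem_annulus [T2Space Y] [LocallyCompactSpace Y]
    [LocallyPathConnectedSpace Y] (hG : IsOpen G)
    (hW : IsShrinkingNhdsSeq (insert ∞ ((↑) '' G)) ∞ W) (hW1 : W 1 = univ) {n : ℕ}
    {a : OnePoint Y} (haG : a ∈ insert ∞ ((↑) '' G))
    (ha : a ∈ closure (W (n + 1)) \ interior (W (n + 2))) :
    ∃ P ∈ 𝓝 a, IsClosed P ∧ IsPreconnected P ∧ ∞ ∈ P ∧
      P ⊆ W (n - 1) ∩ insert ∞ ((↑) '' G) := by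
  have hane : a ≠ ∞ := by
    rintro rfl
    exact ha.2 (mem_interior_iff_mem_nhds.2 (hW.mem_nhds _))
  obtain ⟨y, rfl⟩ := ne_infty_iff_exists.1 hane
  refine exists_closed_nhds_joined_to_infty hG hW (coe_mem_insert_infty_image.1 haG) ?_
  rcases n with _ | n
  · simp [hW1]
  · exact hW.closure_succ_subset _ ha.1

end OnePointSpace

theorem exists_isClosed_isPreconnected_superset {Y : Type*} [TopologicalSpace Y] [T2Space Y]
    [LocallyCompactSpace Y] [SigmaCompactSpace Y] [LocallyPathConnectedSpace Y] {G : Set Y}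
    (hG : IsOpen G) (hconn : IsPreconnected (insert ∞ ((↑) '' G) : Set (OnePoint Y)))
    (hloc : LocConnAt (insert ∞ ((↑) '' G) : Set (OnePoint Y)) ∞) {A : Set (OnePoint Y)}
    (hA : IsClosed A) (hAE : A ⊆ insert ∞ ((↑) '' G)) :
    ∃ C, IsClosed C ∧ IsPreconnected C ∧ ∞ ∈ C ∧ A ⊆ C ∧ C ⊆ insert ∞ ((↑) '' G) := by
  obtain ⟨W, hW, hW1⟩ := exists_isShrinkingNhdsSeq hconn hloc
  have hpiece : ∀ n, ∀ a ∈ A ∩ (closure (W (n + 1)) \ interior (W (n + 2))),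
      ∃ P ∈ 𝓝 a, IsClosed P ∧ IsPreconnected P ∧ ∞ ∈ P ∧
        P ⊆ W (n - 1) ∩ insert ∞ ((↑) '' G) :=
    fun n a ha => exists_closed_nhds_joined_to_infty_of_mem_annulus hG hW hW1 (hAE ha.1) ha.2
  choose! P hPnhds hPcl hPpre hinfP hPsub using hpiece
  choose t ht using fun n =>
    (hA.inter (isClosed_closure.sdiff isOpen_interior)).isCompact.elim_nhds_subcover
      (P n) (hPnhds n)
  let S : ℕ → Set (OnePoint Y) := fun n => ⋃ a ∈ t n, P n a
  refine ⟨insert ∞ (⋃ n, S n), ?_, ?_, mem_insert _ _, ?_, ?_⟩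
  · refine isClosed_insert_iUnion_of_tendsto_smallSets
      (fun n => isClosed_biUnion_finset fun a ha => hPcl n a ((ht n).1 a ha))
      ((hW.tendsto.comp (tendsto_sub_atTop_nat 1)).smallSets_mono (Eventually.of_forall fun n =>
        iUnion₂_subset fun a ha => (hPsub n a ((ht n).1 a ha)).trans inter_subset_left))
  · refine isPreconnected_of_forall ∞ ?_
    rintro x (rfl | hx)
    · exact ⟨{∞}, singleton_subset_iff.2 (mem_insert _ _), rfl, rfl, isPreconnected_singleton⟩
    · obtain ⟨n, a, ha, hxP⟩ : ∃ n, ∃ a ∈ t n, x ∈ P n a := by simpa [S] using hx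
      refine ⟨P n a, ?_, hinfP n a ((ht n).1 a ha), hxP, hPpre n a ((ht n).1 a ha)⟩
      exact (subset_biUnion_of_mem (u := P n) ha).trans
        ((subset_iUnion S n).trans (subset_insert _ _))
  · intro a haA
    rcases eq_or_ne a ∞ with rfl | hne
    · exact mem_insert _ _
    obtain ⟨n, hn⟩ := hW.exists_mem_annulus hW1 hne
    obtain ⟨b, hb, hab⟩ := mem_iUnion₂.1 ((ht n).2 ⟨haA, hn⟩)
    exact mem_insert_of_mem _ (mem_iUnion_of_mem n (mem_biUnion hb hab))
  · exact insert_subset (mem_insert _ _) (iUnion_subset fun n =>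
      iUnion₂_subset fun a ha => (hPsub n a ((ht n).1 a ha)).trans inter_subset_right)

theorem ocCompl_eq_insert (Ω F : Set ℂ) :
    ocCompl Ω F = insert ∞ (OnePoint.some '' {x : Ω | (x : ℂ) ∈ F}ᶜ) := by
  rw [ocCompl, compl_image_coe, union_singleton]

theorem ocCompl_image_val_preimage_compl {Ω : Set ℂ} {C : Set (OnePoint Ω)} (hC : ∞ ∈ C) :
    ocCompl Ω (Subtype.val '' (OnePoint.some ⁻¹' Cᶜ)) = C := by
  rw [ocCompl, show {x : Ω | (x : ℂ) ∈ Subtype.val '' (OnePoint.some ⁻¹' Cᶜ)} = _ from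
    Subtype.val_injective.preimage_image _, image_preimage_eq_inter_range, compl_inter,
    compl_compl, compl_range_coe, union_singleton, insert_eq_of_mem hC]

theorem stmt4 (Ω F : Set ℂ) (hΩ : IsOpen Ω) (hF : ArakelianIn Ω F) :
    ∀ U : Set ℂ, IsOpen U → F ⊆ U → U ⊆ Ω →
      ∃ V : Set ℂ, IsOpen V ∧ V ⊆ Ω ∧ F ⊆ V ∧ V ⊆ U ∧
        IsConnected (ocCompl Ω V) := by
  obtain ⟨⟨hFΩ, hFcl⟩, hconn, hloc⟩ := hF
  intro U hU hFU _
  have : LocallyCompactSpace Ω := hΩ.locallyCompactSpace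
  have : LocallyPathConnectedSpace Ω := hΩ.locallyPathConnectedSpace
  have hUF : ocCompl Ω U ⊆ ocCompl Ω F := compl_subset_compl.2 (image_mono fun _ hx => hFU hx)
  rw [ocCompl_eq_insert Ω F] at hconn hloc hUF
  obtain ⟨C, hCcl, hCpre, hinfC, hUC, hCF⟩ := exists_isClosed_isPreconnected_superset
    hFcl.isOpen_compl hconn.isPreconnected hloc (A := ocCompl Ω U)
    (isClosed_compl_iff.2 (isOpen_image_coe.2 (hU.preimage continuous_subtype_val))) hUF
  refine ⟨Subtype.val '' (OnePoint.some ⁻¹' Cᶜ),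
    hΩ.isOpenMap_subtype_val _ (hCcl.isOpen_compl.preimage continuous_coe),
    Subtype.coe_image_subset _ _, fun z hz => ⟨⟨z, hFΩ hz⟩, fun hzC => ?_, rfl⟩, ?_, ?_⟩
  · exact coe_mem_insert_infty_image.1 (hCF hzC) hz
  · rintro _ ⟨x, hxC, rfl⟩
    by_contra hxU
    exact hxC (hUC (by rwa [ocCompl, mem_compl_iff, coe_injective.mem_set_image]))
  · rw [ocCompl_image_val_preimage_compl hinfC]
    exact ⟨⟨∞, hinfC⟩, hCpre⟩
end
end

section
/- Let Ω ⊆ ℂ be open and F ⊆ Ω relatively closed. Suppose that for every open set U with F ⊆ U ⊆ Ω there exists an open set V ⊆ Ω with F ⊆ V ⊆ U and (Ω ∪ {α}) \ V connected. Then F is an Arakelian set in Ω. -/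
open Topology Filter Set

noncomputable section

/-!
Each `x ∈ Ω \ F` lies, together with `α`, in the connected set `(Ω ∪ {α}) \ V` for an open
`V ⊇ F` avoiding `x`; this gives connectedness.

For local connectedness at `α`, fix a compact `K ⊆ Ω`. The holes of `K ∪ F` (components
of `Ω \ (K ∪ F)` that are relatively compact in `Ω`) lie in a compact set: otherwise pick
a closed, non-compact set `T` of hole points outside an open `O ⋐ Ω` containing `K`, and an
open `V ⊇ F` avoiding `T` with `(Ω ∪ {α}) \ V` connected. By boundary bumping in this
continuum, the hole through each point of `T` reaches the compact set
`∂O \ V ⊆ Ω \ (K ∪ F)`, which meets only finitely many components, so `T` would be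
relatively compact. Removing `K` and the closure of the holes leaves a neighbourhood of `α`
whose trace on `(Ω ∪ {α}) \ F` is `α` together with unbounded components, each of which
has `α` in its closure.
-/

open OnePoint

section

variable {X : Type*} [TopologicalSpace X]

lemma exists_isClopen_of_disjoint_connectedComponent [T2Space X] [CompactSpace X]
    {x : X} {G : Set X} (hG : IsClosed G) (h : Disjoint (connectedComponent x) G) :
    ∃ U, IsClopen U ∧ x ∈ U ∧ Disjoint U G := by
  rw [connectedComponent_eq_iInter_isClopen, disjoint_iff_inter_eq_empty, inter_comm] at h
  obtain ⟨u, hu⟩ := hG.isCompact.elim_finite_subfamily_closed _ (fun U => U.2.1.isClosed) h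
  refine ⟨⋂ U ∈ u, U.1, isClopen_biInter_finset fun U _ => U.2.1,
    mem_iInter₂.2 fun U _ => U.2.2, ?_⟩
  rw [disjoint_iff_inter_eq_empty, inter_comm, hu]

/-- The boundary bumping theorem. -/
theorem connectedComponentIn_diff_inter_closure_nonempty [T2Space X]
    {S W : Set X} (hSc : IsCompact S) (hS : IsPreconnected S) (hW : IsOpen W)
    (hSW : (S ∩ W).Nonempty) {x : X} (hx : x ∈ S \ W) :
    (connectedComponentIn (S \ W) x ∩ closure (S ∩ W)).Nonempty := by
  by_contra hdisj
  have : CompactSpace (S \ W : Set X) :=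
    isCompact_iff_compactSpace.1 (hSc.diff hW)
  obtain ⟨Q, hQ, hxQ, hQG⟩ := exists_isClopen_of_disjoint_connectedComponent
    (X := (S \ W : Set X)) (x := ⟨x, hx⟩) (G := (↑) ⁻¹' closure (S ∩ W))
    (isClosed_closure.preimage continuous_subtype_val) (by
      rw [Set.disjoint_iff]
      rintro y ⟨hy, hyW⟩
      exact hdisj ⟨y, by rw [connectedComponentIn_eq_image hx]; exact ⟨y, hy, rfl⟩, hyW⟩)
  have hP₁ : IsClosed (((↑) : (S \ W : Set X) → X) '' Q) :=
    (hQ.isClosed.isCompact.image continuous_subtype_val).isClosed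
  have hP₂ : IsClosed (((↑) : (S \ W : Set X) → X) '' Qᶜ ∪ closure (S ∩ W)) :=
    (hQ.compl.isClosed.isCompact.image continuous_subtype_val).isClosed.union isClosed_closure
  have hcover : S ⊆ (↑) '' Q ∪ ((↑) '' Qᶜ ∪ closure (S ∩ W)) := by
    intro y hy
    by_cases hyW : y ∈ W
    · exact Or.inr (Or.inr (subset_closure ⟨hy, hyW⟩))
    · by_cases hyQ : (⟨y, hy, hyW⟩ : (S \ W : Set X)) ∈ Q
      · exact Or.inl ⟨_, hyQ, rfl⟩
      · exact Or.inr (Or.inl ⟨_, hyQ, rfl⟩)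
  have hP₁₂ : S ∩ ((↑) '' Q ∩ ((↑) '' Qᶜ ∪ closure (S ∩ W))) = ∅ := by
    ext y
    simp only [mem_inter_iff, mem_union, mem_image, mem_empty_iff_false, iff_false]
    rintro ⟨-, ⟨z, hz, rfl⟩, ⟨z', hz', hzz'⟩ | hcl⟩
    · obtain rfl := Subtype.ext hzz'
      exact hz' hz
    · exact Set.disjoint_left.1 hQG hz hcl
  rcases isPreconnected_iff_subset_of_disjoint_closed.1 hS _ _ hP₁ hP₂ hcover hP₁₂
    with hS₁ | hS₂
  · obtain ⟨y, hyS, hyW⟩ := hSW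
    obtain ⟨z, -, rfl⟩ := hS₁ hyS
    exact z.2.2 hyW
  · rcases hS₂ hx.1 with ⟨z, hz, hzx⟩ | hxcl
    · obtain rfl : z = ⟨x, hx⟩ := Subtype.ext hzx
      exact hz hxQ
    · exact Set.disjoint_left.1 hQG hxQ hxcl

theorem IsCompact.finite_image_connectedComponentIn [LocallyConnectedSpace X] {G Q : Set X}
    (hG : IsOpen G) (hQ : IsCompact Q) (hQG : Q ⊆ G) :
    (connectedComponentIn G '' Q).Finite := by
  obtain ⟨t, htQ, ht, hQt⟩ := hQ.elim_finite_subcover_image (c := connectedComponentIn G)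
    (fun _ _ => hG.connectedComponentIn)
    (fun x hx => mem_biUnion hx (mem_connectedComponentIn (hQG hx)))
  refine (ht.image (connectedComponentIn G)).subset ?_
  rintro _ ⟨x, hx, rfl⟩
  obtain ⟨y, hyt, hxy⟩ := mem_iUnion₂.1 (hQt hx)
  exact ⟨y, hyt, connectedComponentIn_eq hxy⟩

theorem exists_isClosed_subset_of_not_isCompact_closure [T2Space X] [WeaklyLocallyCompactSpace X]
    [SigmaCompactSpace X] {S : Set X} (hS : ¬ IsCompact (closure S)) :
    ∃ T ⊆ S, IsClosed T ∧ ¬ IsCompact T := by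
  let K := CompactExhaustion.choice X
  have hSK : ∀ n, ∃ x ∈ S, x ∉ K n := fun n =>
    not_subset.1 fun hSK => hS ((K.isCompact n).closure_of_subset hSK)
  choose x hxS hxK using hSK
  refine ⟨range x, range_subset_iff.2 hxS, ?_, fun hT => ?_⟩
  · rw [← iUnion_singleton_eq_range]
    refine LocallyFinite.isClosed_iUnion (fun p => ?_) fun _ => isClosed_singleton
    obtain ⟨n, hn⟩ := K.exists_mem_nhds p
    refine ⟨K n, hn, (finite_lt_nat n).subset fun i ⟨_, hi, hiK⟩ => ?_⟩
    rw [mem_singleton_iff.1 hi] at hiK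
    show i < n
    by_contra! hni
    exact hxK i (K.subset hni hiK)
  · obtain ⟨n, hn⟩ := K.exists_superset_of_isCompact hT
    exact hxK n (hn (mem_range_self n))

lemma infty_mem_closure_coe_image {C : Set X} (hC : ¬ IsCompact (closure C)) :
    (∞ : OnePoint X) ∈ closure ((↑) '' C) := by
  rw [mem_closure_iff_nhds_basis hasBasis_nhds_infty]
  rintro s ⟨hs, hsc⟩
  obtain ⟨c, hcC, hcs⟩ := not_subset.1 fun hCs =>
    hC (hsc.of_isClosed_subset isClosed_closure (closure_minimal hCs hs))
  exact ⟨c, mem_image_of_mem _ hcC, Or.inl (mem_image_of_mem _ hcs)⟩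

lemma isConnected_compl_coe_image_of_forall {S : Set X}
    (h : ∀ x ∉ S, ∃ C, x ∈ C ∧ IsPreconnected C ∧ Disjoint C S ∧ ¬ IsCompact (closure C)) :
    IsConnected ((↑) '' S : Set (OnePoint X))ᶜ := by
  refine ⟨⟨∞, infty_notMem_image_coe⟩, isPreconnected_of_forall ∞ fun p hp => ?_⟩
  induction p using OnePoint.rec with
  | infty => exact ⟨{∞}, singleton_subset_iff.2 hp, rfl, rfl, isPreconnected_singleton⟩
  | coe x =>
    obtain ⟨C, hxC, hC, hCS, hCc⟩ := h x fun hx => hp (mem_image_of_mem _ hx)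
    refine ⟨insert ∞ ((↑) '' C), insert_subset infty_notMem_image_coe
      ((image_mono (subset_compl_iff_disjoint_right.2 hCS)).trans
        (image_compl_subset coe_injective)),
      mem_insert _ _, mem_insert_of_mem _ (mem_image_of_mem _ hxC), ?_⟩
    exact (hC.image _ continuous_coe.continuousOn).subset_closure (subset_insert _ _)
      (insert_subset (infty_mem_closure_coe_image hCc) subset_closure)

def HasConnectedComplNhdsBasis (F : Set X) : Prop :=
  ∀ U, IsOpen U → F ⊆ U →
    ∃ V, IsOpen V ∧ F ⊆ V ∧ V ⊆ U ∧ IsConnected ((↑) '' V : Set (OnePoint X))ᶜ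

theorem HasConnectedComplNhdsBasis.isConnected_compl_coe_image [T1Space X] {F : Set X}
    (hF : HasConnectedComplNhdsBasis F) : IsConnected ((↑) '' F : Set (OnePoint X))ᶜ := by
  refine ⟨⟨∞, infty_notMem_image_coe⟩, isPreconnected_of_forall ∞ fun p hp => ?_⟩
  induction p using OnePoint.rec with
  | infty => exact ⟨{∞}, singleton_subset_iff.2 hp, rfl, rfl, isPreconnected_singleton⟩
  | coe x =>
    have hxF : x ∉ F := fun hx => hp (mem_image_of_mem _ hx)
    obtain ⟨V, -, hFV, hVx, hV⟩ :=
      hF {x}ᶜ isOpen_compl_singleton (subset_compl_singleton_iff.2 hxF)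
    exact ⟨_, compl_subset_compl.2 (image_mono hFV), infty_notMem_image_coe,
      fun ⟨y, hy, hyx⟩ => hVx hy (coe_injective hyx), hV.isPreconnected⟩

/-- The union of the holes of `E`, i.e. of the components of `Eᶜ` with compact closure. -/
def holes (E : Set X) : Set X := {x | x ∉ E ∧ IsCompact (closure (connectedComponentIn Eᶜ x))}

lemma connectedComponentIn_subset_holes {E : Set X} {x : X} (hx : x ∈ holes E) :
    connectedComponentIn Eᶜ x ⊆ holes E := fun y hy =>
  ⟨connectedComponentIn_subset _ _ hy, by rw [← connectedComponentIn_eq hy]; exact hx.2⟩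

lemma closure_holes_subset [LocallyConnectedSpace X] {E : Set X} (hE : IsClosed E) :
    closure (holes E) ⊆ holes E ∪ E := by
  intro x hx
  by_cases hxE : x ∈ E
  · exact Or.inr hxE
  obtain ⟨y, hyC, hy⟩ := mem_closure_iff.1 hx _ hE.isOpen_compl.connectedComponentIn
    (mem_connectedComponentIn hxE)
  exact Or.inl ⟨hxE, by rw [connectedComponentIn_eq hyC]; exact hy.2⟩

theorem exists_mem_connectedComponentIn_frontier_of_mem_holes [T2Space X]
    [LocallyCompactSpace X] [LocallyConnectedSpace X] {E V O : Set X} (hE : IsClosed E)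
    (hV : IsOpen V) (hVc : IsPreconnected ((↑) '' V : Set (OnePoint X))ᶜ) (hO : IsOpen O)
    (hEVO : E ⊆ V ∪ O)
    {x : X} (hx : x ∈ holes E) (hxV : x ∉ V) (hxO : x ∉ O) :
    ∃ c ∈ connectedComponentIn Eᶜ x, c ∈ frontier O \ V := by
  set C := connectedComponentIn Eᶜ x
  set P := closure C \ O
  set S : Set (OnePoint X) := ((↑) '' V)ᶜ
  set W : Set (OnePoint X) := ((↑) '' P)ᶜ
  have hS : IsCompact S := (isOpen_image_coe.2 hV).isClosed_compl.isCompact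
  have hW : IsOpen W :=
    (isClosed_image_coe.2 ⟨isClosed_closure.sdiff hO, hx.2.diff hO⟩).isOpen_compl
  have hxSW : (x : OnePoint X) ∈ S \ W :=
    ⟨fun ⟨y, hy, hyx⟩ => hxV (coe_injective hyx ▸ hy),
      not_not.2 ⟨x, ⟨subset_closure (mem_connectedComponentIn hx.1), hxO⟩, rfl⟩⟩
  obtain ⟨w, hwD, hwcl⟩ := connectedComponentIn_diff_inter_closure_nonempty hS hVc hW
    ⟨∞, infty_notMem_image_coe, infty_notMem_image_coe⟩ hxSW
  set D := connectedComponentIn (S \ W) (x : OnePoint X)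
  have hDP : D ⊆ (↑) '' P := fun p hp => not_not.1 (connectedComponentIn_subset _ _ hp).2
  have hDV : ∀ y : X, (y : OnePoint X) ∈ D → y ∉ V := fun y hy hyV =>
    (connectedComponentIn_subset _ _ hy).1 (mem_image_of_mem _ hyV)
  have hDC : (↑) ⁻¹' D ⊆ C := by
    refine (isPreconnected_connectedComponentIn.preimage_of_isOpenMap coe_injective
      isOpenMap_coe (hDP.trans (image_subset_range _ _))).subset_connectedComponentIn
      (mem_connectedComponentIn hxSW) fun y hy hyE => (hEVO hyE).elim (hDV y hy) fun hyO => ?_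
    obtain ⟨z, hz, hzy⟩ := hDP hy
    exact hz.2 (coe_injective hzy ▸ hyO)
  obtain ⟨c, hcP, rfl⟩ := hDP hwD
  refine ⟨c, hDC hwD, ?_, hDV c hwD⟩
  rw [hO.frontier_eq]
  refine ⟨by_contra fun hcO => ?_, hcP.2⟩
  have hCP : C ∩ (closure O)ᶜ ⊆ P := fun y hy =>
    ⟨subset_closure hy.1, fun hyO => hy.2 (subset_closure hyO)⟩
  have hcint : (c : OnePoint X) ∈ interior ((↑) '' P) :=
    interior_maximal (image_mono hCP)
      (isOpen_image_coe.2
        (hE.isOpen_compl.connectedComponentIn.inter isClosed_closure.isOpen_compl))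
      ⟨c, ⟨hDC hwD, hcO⟩, rfl⟩
  have hcW : (c : OnePoint X) ∈ closure W := closure_mono inter_subset_right hwcl
  rw [closure_compl] at hcW
  exact hcW hcint

end

namespace HasConnectedComplNhdsBasis

variable {X : Type*} [TopologicalSpace X] [T2Space X] [LocallyCompactSpace X]
  [LocallyConnectedSpace X] [SigmaCompactSpace X] {F : Set X}

theorem isCompact_closure_holes (hF : IsClosed F) (hFV : HasConnectedComplNhdsBasis F)
    {K : Set X} (hK : IsCompact K) : IsCompact (closure (holes (K ∪ F))) := by
  set E := K ∪ F
  have hE : IsClosed E := hK.isClosed.union hF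
  obtain ⟨L, hL, hKL⟩ := exists_compact_superset hK
  set O := interior L
  have hO : IsOpen O := isOpen_interior
  have hOc : IsCompact (closure O) := hL.closure_of_subset interior_subset
  have hsplit : holes E ⊆ closure (holes E \ O) ∪ closure O := fun y hy =>
    by_cases (fun hyO : y ∈ O => Or.inr (subset_closure hyO))
      fun hyO => Or.inl (subset_closure ⟨hy, hyO⟩)
  by_contra hholes
  obtain ⟨T, hT, hTc, hTnc⟩ :=
    exists_isClosed_subset_of_not_isCompact_closure (S := holes E \ O) fun h => hholes <|
      (h.union hOc).of_isClosed_subset isClosed_closure <|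
        closure_minimal hsplit (isClosed_closure.union isClosed_closure)
  obtain ⟨V, hV, hFV, hVT, hVc⟩ :=
    hFV Tᶜ hTc.isOpen_compl fun y hyF hyT => (hT hyT).1.1 (Or.inr hyF)
  have hEVO : E ⊆ V ∪ O :=
    union_subset (hKL.trans subset_union_right) (hFV.trans subset_union_left)
  set Q := frontier O \ V
  have hQ : IsCompact Q :=
    (hOc.of_isClosed_subset isClosed_frontier frontier_subset_closure).diff hV
  have hQE : Q ⊆ Eᶜ := fun y hy hyE =>
    (hEVO hyE).elim hy.2 (hO.frontier_eq ▸ hy.1).2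
  have hTQ : T ⊆ ⋃ D ∈ connectedComponentIn Eᶜ '' (Q ∩ holes E), closure D := by
    intro t ht
    obtain ⟨c, hct, hcQ⟩ := exists_mem_connectedComponentIn_frontier_of_mem_holes hE hV
      hVc.isPreconnected hO hEVO (hT ht).1 (fun htV => hVT htV ht) (hT ht).2
    refine mem_biUnion ⟨c, ⟨hcQ, connectedComponentIn_subset_holes (hT ht).1 hct⟩, rfl⟩ ?_
    rw [← connectedComponentIn_eq hct]
    exact subset_closure (mem_connectedComponentIn (hT ht).1.1)
  have hfin : (connectedComponentIn Eᶜ '' (Q ∩ holes E)).Finite :=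
    (hQ.finite_image_connectedComponentIn hE.isOpen_compl hQE).subset
      (image_mono inter_subset_left)
  refine hTnc ((hfin.isCompact_biUnion ?_).of_isClosed_subset hTc hTQ)
  rintro _ ⟨c, hc, rfl⟩
  exact hc.2.2

theorem locConnAt_compl_coe_image (hF : IsClosed F) (hFV : HasConnectedComplNhdsBasis F) :
    LocConnAt ((↑) '' F : Set (OnePoint X))ᶜ ∞ := by
  intro N hN
  obtain ⟨K, ⟨hK, hKc⟩, hKN⟩ := hasBasis_nhds_infty.mem_iff.1 hN
  set E := K ∪ F
  have hE : IsClosed E := hK.union hF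
  set K' := K ∪ closure (holes E)
  have hK' : IsClosed K' ∧ IsCompact K' :=
    ⟨hK.union isClosed_closure, hKc.union (hFV.isCompact_closure_holes hF hKc)⟩
  refine ⟨((↑) '' K')ᶜ,
    (isClosed_image_coe.2 hK').isOpen_compl.mem_nhds infty_notMem_image_coe, fun p hp => ?_, ?_⟩
  · induction p using OnePoint.rec with
    | infty => exact hKN (Or.inr rfl)
    | coe y => exact hKN (Or.inl ⟨y, fun hy => hp (mem_image_of_mem _ (Or.inl hy)), rfl⟩)
  rw [← compl_union, ← image_union]
  refine isConnected_compl_coe_image_of_forall fun x hx => ?_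
  have hxE : x ∈ Eᶜ := fun hxE => hx (hxE.elim (fun hxK => Or.inl (Or.inl hxK)) Or.inr)
  have hxholes : x ∉ holes E := fun h => hx (Or.inl (Or.inr (subset_closure h)))
  refine ⟨connectedComponentIn Eᶜ x, mem_connectedComponentIn hxE,
    isPreconnected_connectedComponentIn, Set.disjoint_left.2 fun y hyC hy => ?_,
    fun h => hxholes ⟨hxE, h⟩⟩
  have hyE : y ∉ E := connectedComponentIn_subset _ _ hyC
  rcases hy with (hyK | hyH) | hyF
  · exact hyE (Or.inl hyK)
  · refine (closure_holes_subset hE hyH).elim (fun hy => hxholes ?_) hyE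
    exact connectedComponentIn_subset_holes hy
      (connectedComponentIn_eq hyC ▸ mem_connectedComponentIn hxE)
  · exact hyE (Or.inr hyF)

end HasConnectedComplNhdsBasis

lemma hasConnectedComplNhdsBasis_preimage_coe {Ω F : Set ℂ} (hΩ : IsOpen Ω) (hFΩ : F ⊆ Ω)
    (h : ∀ U : Set ℂ, IsOpen U → F ⊆ U → U ⊆ Ω →
      ∃ V : Set ℂ, IsOpen V ∧ V ⊆ Ω ∧ F ⊆ V ∧ V ⊆ U ∧ IsConnected (ocCompl Ω V)) :
    HasConnectedComplNhdsBasis ((↑) ⁻¹' F : Set Ω) := by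
  intro U hU hFU
  obtain ⟨V, hV, -, hFV, hVU, hVc⟩ := h ((↑) '' U) (hΩ.isOpenMap_subtype_val U hU)
    (fun z hz => ⟨⟨z, hFΩ hz⟩, hFU hz, rfl⟩) (Subtype.coe_image_subset Ω U)
  exact ⟨Subtype.val ⁻¹' V, hV.preimage continuous_subtype_val, fun z hz => hFV hz,
    fun z hz => Subtype.val_injective.mem_set_image.1 (hVU hz), hVc⟩

theorem stmt5 (Ω F : Set ℂ) (hΩ : IsOpen Ω) (hF : RelClosed Ω F)
    (h : ∀ U : Set ℂ, IsOpen U → F ⊆ U → U ⊆ Ω →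
      ∃ V : Set ℂ, IsOpen V ∧ V ⊆ Ω ∧ F ⊆ V ∧ V ⊆ U ∧
        IsConnected (ocCompl Ω V)) :
    ArakelianIn Ω F := by
  have : LocallyCompactSpace Ω := hΩ.locallyCompactSpace
  have : LocallyConnectedSpace Ω := hΩ.locallyConnectedSpace
  have hFV := hasConnectedComplNhdsBasis_preimage_coe hΩ hF.1 h
  exact ⟨hF, hFV.isConnected_compl_coe_image, hFV.locConnAt_compl_coe_image hF.2⟩
end
end

section
/- Let Ω ⊆ ℂ be a simply connected open set and G ⊆ Ω. Then (Ω ∪ {α}) \ G is connected if and only if (ℂ ∪ {∞}) \ G is connected. -/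
open Topology Filter Set

noncomputable section

/-!
Collapsing `(ℂ ∪ {∞}) \ Ω` to the point `α` gives a continuous surjection `q : ℂ ∪ {∞} → Ω ∪ {α}`.
It is closed (compact source, Hausdorff target), and its fibres, single points and the connected
set `q⁻¹ {α} = (ℂ ∪ {∞}) \ Ω`, are connected. For such a map a set is connected iff its preimage
is, and `q⁻¹ ((Ω ∪ {α}) \ G) = (ℂ ∪ {∞}) \ G` because `G ⊆ Ω`.
-/

theorem IsClosedMap.isPreconnected_preimage {X Y : Type*} [TopologicalSpace X]
    [TopologicalSpace Y] {f : X → Y} (hf : IsClosedMap f) (hc : Continuous f)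
    (hfib : ∀ y, IsConnected (f ⁻¹' {y})) {s : Set Y} (hs : IsPreconnected s) :
    IsPreconnected (f ⁻¹' s) := by
  rcases s.eq_empty_or_nonempty with rfl | ⟨y, hy⟩
  · simpa using isPreconnected_empty
  have hsurj : Function.Surjective f := fun y => (hfib y).nonempty
  have hq : IsQuotientMap (s.restrictPreimage f) :=
    (hf.restrictPreimage s).isQuotientMap hc.restrictPreimage (hsurj.restrictPreimage s)
  have hfib' (t : s) : IsConnected (s.restrictPreimage f ⁻¹' {t}) := by
    have h : Subtype.val '' (s.restrictPreimage f ⁻¹' {t}) = f ⁻¹' {(t : Y)} := by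
      rw [image_val_preimage_restrictPreimage, image_singleton]
    exact ⟨(h ▸ (hfib t).nonempty).of_image,
      IsInducing.subtypeVal.isPreconnected_image.mp (h ▸ (hfib t).isPreconnected)⟩
  have : ConnectedSpace s := isConnected_iff_connectedSpace.mp ⟨⟨y, hy⟩, hs⟩
  have := (hq.isCoinducing.isConnected_preimage_of_isClosed hfib' isClosed_univ
    isConnected_univ).isPreconnected
  rwa [preimage_univ, ← IsInducing.subtypeVal.isPreconnected_image, image_univ,
    Subtype.range_val] at this

theorem IsClosedMap.isConnected_preimage_iff {X Y : Type*} [TopologicalSpace X]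
    [TopologicalSpace Y] {f : X → Y} (hf : IsClosedMap f) (hc : Continuous f)
    (hfib : ∀ y, IsConnected (f ⁻¹' {y})) {s : Set Y} :
    IsConnected (f ⁻¹' s) ↔ IsConnected s := by
  have hsurj : Function.Surjective f := fun y => (hfib y).nonempty
  refine ⟨fun h => ?_, fun h => ⟨h.nonempty.preimage hsurj, hf.isPreconnected_preimage hc hfib h.2⟩⟩
  simpa only [image_preimage_eq s hsurj] using h.image f hc.continuousOn

namespace OnePoint

variable {X : Type*} {U : Set X}

lemma image_coe_preimage_coe {s : Set (OnePoint X)} (h : ∞ ∉ s) :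
    (↑) '' ((↑) ⁻¹' s : Set X) = s :=
  image_preimage_eq_of_subset (compl_infty ▸ subset_compl_singleton_iff.2 h)

open Classical in
def collapse (U : Set X) (x : OnePoint X) : OnePoint U :=
  x.elim ∞ fun x => if h : x ∈ U then ((⟨x, h⟩ : U) : OnePoint U) else ∞

@[simp] lemma collapse_infty : collapse U ∞ = ∞ := rfl

lemma collapse_coe_of_mem {x : X} (h : x ∈ U) : collapse U x = ((⟨x, h⟩ : U) : OnePoint U) := by
  simp [collapse, h]

lemma collapse_coe_of_notMem {x : X} (h : x ∉ U) : collapse U x = ∞ := by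
  simp [collapse, h]

lemma preimage_collapse_image_coe (W : Set U) :
    collapse U ⁻¹' ((↑) '' W) = (↑) '' (Subtype.val '' W) := by
  ext x
  induction x using OnePoint.rec with
  | infty => simp
  | coe x =>
    by_cases hx : x ∈ U
    · simp [collapse_coe_of_mem hx, hx]
    · simp [collapse_coe_of_notMem hx, hx]

lemma preimage_collapse_infty : collapse U ⁻¹' {∞} = ((↑) '' U)ᶜ := by
  ext x
  induction x using OnePoint.rec with
  | infty => simp
  | coe x =>
    by_cases hx : x ∈ U
    · simp [collapse_coe_of_mem hx, hx]
    · simp [collapse_coe_of_notMem hx, hx]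

variable [TopologicalSpace X]

lemma isConnected_preimage_collapse (hUc : IsConnected ((↑) '' U : Set (OnePoint X))ᶜ)
    (y : OnePoint U) : IsConnected (collapse U ⁻¹' {y}) := by
  induction y using OnePoint.rec with
  | infty => rwa [preimage_collapse_infty]
  | coe u =>
    rw [← image_singleton, preimage_collapse_image_coe, image_singleton, image_singleton]
    exact isConnected_singleton

lemma continuous_collapse [T2Space X] (hU : IsOpen U) : Continuous (collapse U) := by
  refine continuous_def.2 fun s hs => ?_
  by_cases h : ∞ ∈ s
  · have hK : IsCompact ((↑) ⁻¹' s : Set U)ᶜ := ((isOpen_iff_of_mem' h).1 hs).1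
    rw [← compl_compl s, ← image_coe_preimage_coe (notMem_compl_iff.2 h), preimage_compl,
      preimage_collapse_image_coe, isOpen_compl_image_coe, preimage_compl]
    exact ⟨(hK.image continuous_subtype_val).isClosed, hK.image continuous_subtype_val⟩
  · rw [← image_coe_preimage_coe h, preimage_collapse_image_coe, isOpen_image_coe]
    exact hU.isOpenMap_subtype_val _ ((isOpen_iff_of_notMem h).1 hs)

theorem isConnected_compl_image_coe_iff [T2Space X] [LocallyCompactSpace X] (hU : IsOpen U)
    (hUc : IsConnected ((↑) '' U : Set (OnePoint X))ᶜ) (G : Set U) :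
    IsConnected ((↑) '' G : Set (OnePoint U))ᶜ ↔
      IsConnected ((↑) '' (Subtype.val '' G) : Set (OnePoint X))ᶜ := by
  have : LocallyCompactSpace U := hU.locallyCompactSpace
  have hq := continuous_collapse hU
  rw [← hq.isClosedMap.isConnected_preimage_iff hq (isConnected_preimage_collapse hUc),
    preimage_compl, preimage_collapse_image_coe]

end OnePoint

theorem stmt7 (Ω G : Set ℂ) (hΩ : IsOpen Ω) (hΩc : IsConnected (sphereCompl Ω))
    (hG : G ⊆ Ω) :
    IsConnected (ocCompl Ω G) ↔ IsConnected (sphereCompl G) := by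
  have h := OnePoint.isConnected_compl_image_coe_iff hΩ hΩc {x : Ω | (x : ℂ) ∈ G}
  rwa [Subtype.coe_image_of_subset hG] at h
end
end

section
/- If V₁, V₂ ⊆ ℂ are disjoint open sets each with connected complement in ℂ ∪ {∞}, then each connected component of V₁ ∪ V₂ has connected complement in ℂ ∪ {∞}. -/
open Topology Filter Set

noncomputable section

/-- A point of `V` in the closure of a connected component of `V` lies in that component. -/
lemma mem_comp_of_mem_closure {V : Set ℂ} (hV : IsOpen V) {y w : ℂ} (hw : w ∈ V)
    (hwc : w ∈ closure (connectedComponentIn V y)) : w ∈ connectedComponentIn V y := by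
  have hop : IsOpen (connectedComponentIn V w) := hV.connectedComponentIn
  have hmem : w ∈ connectedComponentIn V w := mem_connectedComponentIn hw
  obtain ⟨u, hu1, hu2⟩ := mem_closure_iff.mp hwc _ hop hmem
  have h1 : connectedComponentIn V w = connectedComponentIn V u := connectedComponentIn_eq hu1
  have h2 : connectedComponentIn V y = connectedComponentIn V u := connectedComponentIn_eq hu2
  rw [h2, ← h1]; exact hmem

/-- The closure (in the sphere) of a component of open `V` meets the sphere complement. -/
lemma closure_comp_meets {V : Set ℂ} (hV : IsOpen V) {y : ℂ} (hy : y ∈ V) :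
    (closure (OnePoint.some '' connectedComponentIn V y) ∩ sphereCompl V).Nonempty := by
  by_contra h
  rw [not_nonempty_iff_eq_empty] at h
  set D := connectedComponentIn V y with hD
  have hsub : closure (OnePoint.some '' D) ⊆ OnePoint.some '' V := by
    intro z hz
    by_contra hz'
    exact absurd h (Set.nonempty_iff_ne_empty.mp ⟨z, hz, hz'⟩)
  have hDo : IsOpen D := hV.connectedComponentIn
  have hopen : IsOpen (OnePoint.some '' D) :=
    OnePoint.isOpenEmbedding_coe.isOpenMap _ hDo
  have hclosed : IsClosed (OnePoint.some '' D) := by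
    rw [← closure_subset_iff_isClosed]
    intro z hz
    obtain ⟨w, hwV, rfl⟩ := hsub hz
    have hwcl : w ∈ closure D := by
      rw [OnePoint.isOpenEmbedding_coe.isEmbedding.closure_eq_preimage_closure_image D]
      exact hz
    exact mem_image_of_mem _ (mem_comp_of_mem_closure hV hwV hwcl)
  have hne : (OnePoint.some '' D).Nonempty :=
    ⟨y, mem_image_of_mem _ (mem_connectedComponentIn hy)⟩
  rcases isClopen_iff.mp ⟨hclosed, hopen⟩ with h0 | h0
  · exact absurd h0 (Set.nonempty_iff_ne_empty.mp hne)
  · have : OnePoint.infty ∈ OnePoint.some '' D := h0 ▸ mem_univ _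
    obtain ⟨w, _, hw⟩ := this
    exact OnePoint.coe_ne_infty w hw

/-- Main auxiliary lemma: components of an open set with connected sphere
complement have connected sphere complement. -/
lemma aux_main {V : Set ℂ} (hV : IsOpen V) (hc : IsConnected (sphereCompl V))
    {x : ℂ} (hx : x ∈ V) : IsConnected (sphereCompl (connectedComponentIn V x)) := by
  set C := connectedComponentIn V x with hC
  obtain ⟨z₀, hz₀⟩ := hc.nonempty
  set S := sphereCompl V with hS
  -- pieces
  set A : ℂ → Set (OnePoint ℂ) := fun y =>
    S ∪ OnePoint.some '' connectedComponentIn V y with hA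
  set 𝒞 : Set (Set (OnePoint ℂ)) := insert S {B | ∃ y ∈ V \ C, B = A y} with h𝒞
  have hApre : ∀ y ∈ V, IsPreconnected (A y) := by
    intro y hy
    obtain ⟨z, hz1, hz2⟩ := closure_comp_meets hV hy
    set D := connectedComponentIn V y with hD
    have hDconn : IsConnected D := isConnected_connectedComponentIn_iff.mpr hy
    have hfD : IsPreconnected (OnePoint.some '' D) :=
      hDconn.isPreconnected.image _ (OnePoint.continuous_coe.continuousOn)
    have hB : IsPreconnected (OnePoint.some '' D ∪ (closure (OnePoint.some '' D) ∩ S)) := by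
      apply hfD.subset_closure subset_union_left
      exact union_subset subset_closure inter_subset_left
    have hBne : (OnePoint.some '' D ∪ (closure (OnePoint.some '' D) ∩ S)).Nonempty :=
      ⟨z, Or.inr ⟨hz1, hz2⟩⟩
    have hU : IsConnected (S ∪ (OnePoint.some '' D ∪ (closure (OnePoint.some '' D) ∩ S))) :=
      IsConnected.union ⟨z, hz2, Or.inr ⟨hz1, hz2⟩⟩ hc ⟨hBne, hB⟩
    have heq : A y = S ∪ (OnePoint.some '' D ∪ (closure (OnePoint.some '' D) ∩ S)) := by
      apply Subset.antisymm
      · exact union_subset subset_union_left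
          (subset_union_left.trans subset_union_right)
      · apply union_subset subset_union_left
        apply union_subset subset_union_right
        exact inter_subset_right.trans subset_union_left
    rw [heq]
    exact hU.isPreconnected
  -- disjointness of other components from C
  have hdisj : ∀ y ∈ V \ C, ∀ u ∈ connectedComponentIn V y, u ∉ C := by
    intro y hy u hu huC
    have h1 : connectedComponentIn V y = connectedComponentIn V u := connectedComponentIn_eq hu
    have h2 : connectedComponentIn V x = connectedComponentIn V u := connectedComponentIn_eq huC
    have : y ∈ connectedComponentIn V x := by
      rw [h2, ← h1]; exact mem_connectedComponentIn hy.1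
    exact hy.2 this
  -- set equality
  have hCV : C ⊆ V := connectedComponentIn_subset V x
  have heq : sphereCompl C = ⋃₀ 𝒞 := by
    ext z
    constructor
    · intro hz
      by_cases hzV : z ∈ OnePoint.some '' V
      · obtain ⟨w, hwV, rfl⟩ := hzV
        have hwC : w ∉ C := fun hwC => hz (mem_image_of_mem _ hwC)
        refine ⟨A w, Or.inr ⟨w, ⟨hwV, hwC⟩, rfl⟩, Or.inr ?_⟩
        exact mem_image_of_mem _ (mem_connectedComponentIn hwV)
      · exact ⟨S, Or.inl rfl, hzV⟩
    · rintro ⟨B, hB, hzB⟩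
      rcases hB with rfl | ⟨y, hy, rfl⟩
      · exact fun hzC => hzB (image_mono hCV hzC)
      · rcases hzB with hzS | ⟨w, hwD, rfl⟩
        · exact fun hzC => hzS (image_mono hCV hzC)
        · intro hzC
          obtain ⟨u, huC, huw⟩ := hzC
          have : u = w := OnePoint.coe_injective huw
          exact hdisj y hy w hwD (this ▸ huC)
  rw [heq]
  refine ⟨⟨z₀, S, Or.inl rfl, hz₀⟩, ?_⟩
  apply isPreconnected_sUnion z₀
  · rintro B (rfl | ⟨y, _, rfl⟩)
    · exact hz₀
    · exact Or.inl hz₀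
  · rintro B (rfl | ⟨y, hy, rfl⟩)
    · exact hc.isPreconnected
    · exact hApre y hy.1

/-- Components of a union of two disjoint open sets are components of one of them. -/
lemma comp_union_eq {V₁ V₂ : Set ℂ} (h1 : IsOpen V₁) (h2 : IsOpen V₂)
    (hd : Disjoint V₁ V₂) {x : ℂ} (hx : x ∈ V₁) :
    connectedComponentIn (V₁ ∪ V₂) x = connectedComponentIn V₁ x := by
  have hxU : x ∈ V₁ ∪ V₂ := Or.inl hx
  have hC : IsConnected (connectedComponentIn (V₁ ∪ V₂) x) :=
    isConnected_connectedComponentIn_iff.mpr hxU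
  have hsub : connectedComponentIn (V₁ ∪ V₂) x ⊆ V₁ :=
    hC.isPreconnected.subset_left_of_subset_union h1 h2 hd
      (connectedComponentIn_subset _ _) ⟨x, mem_connectedComponentIn hxU, hx⟩
  exact Subset.antisymm
    (hC.isPreconnected.subset_connectedComponentIn (mem_connectedComponentIn hxU) hsub)
    (connectedComponentIn_mono x subset_union_left)

theorem stmt12 (V₁ V₂ : Set ℂ) (h1 : IsOpen V₁) (h2 : IsOpen V₂)
    (hd : Disjoint V₁ V₂)
    (hc1 : IsConnected (sphereCompl V₁)) (hc2 : IsConnected (sphereCompl V₂)) :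
    ∀ x ∈ V₁ ∪ V₂,
      IsConnected (sphereCompl (connectedComponentIn (V₁ ∪ V₂) x)) := by
  intro x hx
  rcases hx with hx | hx
  · rw [comp_union_eq h1 h2 hd hx]
    exact aux_main h1 hc1 hx
  · rw [union_comm, comp_union_eq h2 h1 hd.symm hx]
    exact aux_main h2 hc2 hx
end
end
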